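/- arXiv:1007.1694 — 3 statements merged into one kernel-verified Lean document; each statement's English description precedes it below -/
import Mathlib

section
/- Let Γ be a consistent counter machine with m states, let (y,z) be a Skorokhod solution of the associated problem with z(0) = z^{i⁰,C⁰₁,C⁰₂}, let t ∈ ℕ, and suppose z(5t) = z^{i,C₁,C₂} where (i,C₁,C₂) is the configuration of the trajectory at time t, and let (i′,Δ₁,Δ₂) = Γ(i, 1{C₁>0}, 1{C₂>0}). Then on the interval (5t+4, 5t+5) the coordinate y_{A,5} is active at unit rate and all other y-coordinates are passive, and z(5t+5) = z^{i′, C₁+Δ₁, C₂+Δ₂}, the encoding of the configuration of the trajectory at time t+1. -/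
open scoped BigOperators

/-- A Skorokhod solution for the matrix `R` and input path `x`:
continuous `y, z` on `[0,∞)` with `z = x + R y`, `z ≥ 0`, `y 0 = 0`,
each `y j` nondecreasing, and `y j` does not increase while `z j > 0`
(the Lebesgue–Stieltjes measure of `y j` vanishes on `{s | z s j > 0}`). -/
def IsSkorokhodSolution {n : Type*} [Fintype n] (R : Matrix n n ℝ)
    (x y z : ℝ → n → ℝ) : Prop :=
  ContinuousOn y (Set.Ici 0) ∧
  ContinuousOn z (Set.Ici 0) ∧
  (∀ t : ℝ, 0 ≤ t → z t = x t + R.mulVec (y t)) ∧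
  (∀ t : ℝ, 0 ≤ t → ∀ j, 0 ≤ z t j) ∧
  (y 0 = 0) ∧
  (∀ j, MonotoneOn (fun t => y t j) (Set.Ici 0)) ∧
  (∀ j, ∀ s₁ s₂ : ℝ, 0 ≤ s₁ → s₁ ≤ s₂ →
      (∀ s ∈ Set.Ioo s₁ s₂, 0 < z s j) → y s₂ j = y s₁ j)

/-- `R` is an S-matrix: some nonnegative `w` with `R w > 0` componentwise. -/
def IsSMatrix {n : Type*} [Fintype n] (R : Matrix n n ℝ) : Prop :=
  ∃ w : n → ℝ, (∀ i, 0 ≤ w i) ∧ (∀ i, 0 < R.mulVec w i)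

/-- `R` is completely-S: every (nonempty) principal submatrix is an S-matrix. -/
def IsCompletelyS {n : Type*} [Fintype n] [DecidableEq n] (R : Matrix n n ℝ) : Prop :=
  ∀ I : Finset n, I.Nonempty →
    IsSMatrix (R.submatrix (fun a : I => (a : n)) (fun a : I => (a : n)))

/-- Stability of the fluid model `(z₀, θ, R)`: every Skorokhod solution for
`x t = z₀ + θ t` satisfies `z t → 0` as `t → ∞`. -/
def FluidStable {n : Type*} [Fintype n] (z0 θv : n → ℝ) (R : Matrix n n ℝ) : Prop :=
  ∀ y z : ℝ → n → ℝ,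
    IsSkorokhodSolution R (fun t i => z0 i + θv i * t) y z →
    Filter.Tendsto z Filter.atTop (nhds 0)

/-- `f` is active at rate `r` on `(s₁, s₂)`. -/
def ActiveAtRate (f : ℝ → ℝ) (r s₁ s₂ : ℝ) : Prop :=
  ∀ s ∈ Set.Ioo s₁ s₂, f s - f s₁ = r * (s - s₁)

/-- `f` is active at unit rate on `(s₁, s₂)`. -/
def UnitActive (f : ℝ → ℝ) (s₁ s₂ : ℝ) : Prop := ActiveAtRate f 1 s₁ s₂

/-- `f` is passive (constant) on `(s₁, s₂)`. -/
def Passive (f : ℝ → ℝ) (s₁ s₂ : ℝ) : Prop := ∀ s ∈ Set.Ioo s₁ s₂, f s = f s₁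

/-- A counter machine with `m` states: update map with moves in
`{(-1,0),(0,-1),(0,0),(1,0),(0,1)}`, never decrementing a zero counter. -/
structure CounterMachine (m : ℕ) where
  Γ : Fin m → Bool → Bool → Fin m × ℤ × ℤ
  moves : ∀ i b c, ((Γ i b c).2.1, (Γ i b c).2.2) ∈
      ({(-1,0), (0,-1), (0,0), (1,0), (0,1)} : Set (ℤ × ℤ))
  consistent : ∀ i b c, (b = false → 0 ≤ (Γ i b c).2.1) ∧ (c = false → 0 ≤ (Γ i b c).2.2)

/-- One step of the counter machine on a configuration. -/
def CounterMachine.step {m : ℕ} (M : CounterMachine m) :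
    Fin m × ℕ × ℕ → Fin m × ℕ × ℕ := fun cfg =>
  let r := M.Γ cfg.1 (decide (0 < cfg.2.1)) (decide (0 < cfg.2.2))
  (r.1, ((cfg.2.1 : ℤ) + r.2.1).toNat, ((cfg.2.2 : ℤ) + r.2.2).toNat)

/-- Index set of the associated Skorokhod problem: groups A (5), B (m), C (2),
D (2), E (4m), F (4m); total dimension 5m + 9. -/
inductive Idx (m : ℕ) where
  | A : Fin 5 → Idx m
  | B : Fin m → Idx m
  | C : Fin 2 → Idx m
  | D : Fin 2 → Idx m
  | E : Fin m → Bool → Bool → Idx m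
  | F : Fin m → Bool → Bool → Idx m
  deriving DecidableEq, Fintype

/-- Numeric value of a bit. -/
def bnum (b : Bool) : ℝ := if b then 1 else 0

/-- Real indicator of a decidable proposition. -/
def indC (P : Prop) [Decidable P] : ℝ := if P then 1 else 0

/-- The 5×5 block AA. -/
def AAmat : Matrix (Fin 5) (Fin 5) ℝ :=
  !![1,2,1,1,0; 0,1,2,1,1; 1,0,1,2,1; 1,1,0,1,2; 2,1,1,0,1]

/-- The reflection matrix `R` associated with the counter machine `M`. -/
def Rmat {m : ℕ} (M : CounterMachine m) : Matrix (Idx m) (Idx m) ℝ :=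
  fun p q => match p, q with
  | .A k, .A l => AAmat k l
  | .B _, .A l => if l = 0 then -1 else 0
  | .B j, .B j' => if j' = j then 1 else 0
  | .B j, .E i b c => if (M.Γ i b c).1 = j then 0 else 1
  | .C _, .A l => if l = 0 ∨ l = 3 then -1 else 0
  | .C k, .C k' => if k' = k then 1 else 0
  | .C k, .D k' => if k' = k then 1 else 0
  | .C k, .E i b c =>
      (if k = 0 then ((M.Γ i b c).2.1 : ℝ) else ((M.Γ i b c).2.2 : ℝ)) + 1
  | .D _, .A l => if l = 1 then -1 else 0
  | .D k, .C k' => if k' = k then 1 else 0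
  | .D k, .D k' => if k' = k then 1 else 0
  | .E _ b c, .A l => if l = 0 then -(bnum b) - bnum c else if l = 2 then -1 else 0
  | .E i _ _, .B j => if j = i then -1 else 0
  | .E _ b c, .C k => if k = 0 then 2 * bnum b - 1 else 2 * bnum c - 1
  | .E i b c, .E i' b' c' => if i' = i ∧ b' = b ∧ c' = c then 1 else 0
  | .E i b c, .F i' b' c' => if i' = i ∧ b' = b ∧ c' = c then 1 else 0
  | .F _ b c, .A l => if l = 0 then -(bnum b) - bnum c
      else if l = 2 then -1 else if l = 3 then -4 else if l = 4 then 4 else 0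
  | .F i _ _, .B j => if j = i then -1 else 0
  | .F _ b c, .C k => if k = 0 then 2 * bnum b - 1 else 2 * bnum c - 1
  | .F i b c, .E i' b' c' => if i' = i ∧ b' = b ∧ c' = c then 1 else 0
  | .F i b c, .F i' b' c' => if i' = i ∧ b' = b ∧ c' = c then 1 else 0
  | _, _ => 0

/-- The modified reflection matrix `R*` with halting state `i*`. -/
def RmatStar {m : ℕ} (M : CounterMachine m) (istar : Fin m) :
    Matrix (Idx m) (Idx m) ℝ :=
  fun p q => match p, q with
  | .A k, .B j => if j = istar ∧ (k = 2 ∨ k = 3 ∨ k = 4) then -1 else 0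
  | .E i b c, .B j =>
      if j = istar then -3 + bnum b + bnum c else if j = i then -1 else 0
  | .F i b c, .B j =>
      if j = istar then -4 + bnum b + bnum c else if j = i then -1 else 0
  | p, q => Rmat M p q

/-- The drift vector θ: −1 on the A-coordinates and 0 elsewhere. -/
def thetaVec (m : ℕ) : Idx m → ℝ := fun p => match p with
  | .A _ => -1
  | _ => 0

/-- The encoding `z^{i,C₁,C₂}` of a configuration as a state of the
Skorokhod problem. -/
def encCfg {m : ℕ} (i : Fin m) (C₁ C₂ : ℕ) : Idx m → ℝ := fun p => match p with
  | .A k => if k = 0 ∨ k = 4 then 0 else 1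
  | .B j => if j = i then 0 else 1
  | .C k => if k = 0 then (C₁ : ℝ) else (C₂ : ℝ)
  | .D _ => 0
  | .E _ _ _ => 3
  | .F _ _ _ => 4

/-- The linear input path `x t = z^{i,C₁,C₂} + θ t`. -/
def fluidX {m : ℕ} (i : Fin m) (C₁ C₂ : ℕ) : ℝ → Idx m → ℝ :=
  fun t p => encCfg i C₁ C₂ p + thetaVec m p * t

/-- The quantity Υ(i′,b,c) of the paper (for current configuration (i,C₁,C₂)). -/
def Upsilon {m : ℕ} (i : Fin m) (C₁ C₂ : ℕ) (i' : Fin m) (b c : Bool) : ℝ :=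
  -(bnum b) - bnum c + (2 * bnum b - 1) * indC (C₁ = 0)
    + (2 * bnum c - 1) * indC (C₂ = 0) - indC (i' = i)


/-!
Each of the five unit intervals `[5t + p, 5t + p + 1]` is a stage in which the `A`-block,
whose rows of `R` involve only `A`, works as a clock: at its start `z_A` vanishes exactly at
the coordinates `p - 1` and `p`, and during it only `y_{A,p}` moves, at unit rate
(coordinates are indexed from `0`, so the paper's `y_{A,5}` is `y (.A 4)`). Through the
`A`-columns of `R` the clock pushes the other blocks, and in every stage each remaining
coordinate either stays away from `0`, so that its `y` is constant, or is driven down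
linearly and regulated by the one-dimensional Skorokhod map `max 0 (r (s - T) - c)`.
Solving the coordinates in a suitable order gives the increments of `y` and the values
`z (5t + 1), …, z (5t + 5)` in closed form. In stage 0, `y_B` and `y_C` lower every `E`- and
`F`-coordinate by `-Υ`, the number of agreements of its index `(i', b, c)` with the triple
`(i, 1{C₁>0}, 1{C₂>0})` read by the machine. In stage 2 the read triple is therefore the only
`E`-coordinate driven to `0`, and its `y` writes the next state into `B` and the counter
moves into `C`. Stages 1, 3 and 4 restore the remaining blocks.
-/

open Set

theorem indC_nonneg (P : Prop) [Decidable P] : 0 ≤ indC P := by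
  unfold indC; split <;> norm_num

theorem indC_le_one (P : Prop) [Decidable P] : indC P ≤ 1 := by
  unfold indC; split <;> norm_num

@[simp] theorem indC_true : indC True = 1 := if_pos trivial

@[simp] theorem indC_false : indC False = 0 := if_neg not_false

namespace IsSkorokhodSolution

variable {n : Type*} [Fintype n] {R : Matrix n n ℝ} {x y z : ℝ → n → ℝ}

theorem nonneg (h : IsSkorokhodSolution R x y z) {s : ℝ} (hs : 0 ≤ s) (j : n) :
    0 ≤ z s j :=
  h.2.2.2.1 s hs j

theorem sub_nonneg (h : IsSkorokhodSolution R x y z) {T s : ℝ} (hT : 0 ≤ T) (hs : T ≤ s)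
    (j : n) : 0 ≤ y s j - y T j :=
  sub_nonneg_of_le <| h.2.2.2.2.2.1 j hT (hT.trans hs) hs

theorem apply_eq (h : IsSkorokhodSolution R x y z) {T s : ℝ} (hT : 0 ≤ T) (hs : T ≤ s)
    (j : n) : z s j = z T j + (x s j - x T j) + R.mulVec (y s - y T) j := by
  rw [h.2.2.1 s (hT.trans hs), h.2.2.1 T hT, Matrix.mulVec_sub]
  simp only [Pi.add_apply, Pi.sub_apply]
  ring

theorem sub_le_of_forall_eq_zero (h : IsSkorokhodSolution R x y z) {T S : ℝ} (hT : 0 ≤ T)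
    (j : n) {g : ℝ → ℝ} (hg : ContinuousOn g (Icc T S)) (hgm : MonotoneOn g (Icc T S))
    (hgT : 0 ≤ g T) (hzero : ∀ s ∈ Icc T S, z s j = 0 → y s j - y T j ≤ g s) :
    ∀ s ∈ Icc T S, y s j - y T j ≤ g s := by
  intro s₂ hs₂
  by_contra! hlt
  have hsub : Icc T s₂ ⊆ Icc T S := Icc_subset_Icc le_rfl hs₂.2
  -- `s₁` is the last time before `s₂` at which `y j` is below the barrier; after it `z j > 0`
  set K := Icc T s₂ ∩ {s | y s j - y T j - g s ≤ 0}
  have hcont : ContinuousOn (fun s => y s j - y T j - g s) (Icc T s₂) :=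
    (((continuous_apply j).comp_continuousOn
      (h.1.mono fun u hu => hT.trans hu.1)).sub continuousOn_const).sub (hg.mono hsub)
  have hK : IsClosed K := hcont.preimage_isClosed_of_isClosed isClosed_Icc isClosed_Iic
  have hKne : K.Nonempty := ⟨T, ⟨le_rfl, hs₂.1⟩, by simp [hgT]⟩
  have hKbdd : BddAbove K := ⟨s₂, fun u hu => hu.1.2⟩
  set s₁ := sSup K
  have hs₁ : s₁ ∈ K := hK.csSup_mem hKne hKbdd
  have hs₁K : y s₁ j - y T j - g s₁ ≤ 0 := hs₁.2
  have hs₁s₂ : s₁ < s₂ := by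
    refine (csSup_le hKne fun u hu => hu.1.2).lt_of_ne fun heq => ?_
    rw [show s₁ = s₂ from heq] at hs₁K
    linarith
  have hpos : ∀ u ∈ Ioo s₁ s₂, 0 < z u j := by
    intro u hu
    have huK : u ∉ K := fun huK => (le_csSup hKbdd huK).not_gt hu.1
    have hu' : u ∈ Icc T s₂ := ⟨hs₁.1.1.trans hu.1.le, hu.2.le⟩
    refine (h.nonneg (hT.trans hu'.1) j).lt_of_ne fun hz => huK ⟨hu', ?_⟩
    simpa using hzero u (hsub hu') hz.symm
  have hconst : y s₂ j = y s₁ j :=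
    h.2.2.2.2.2.2 j s₁ s₂ (hT.trans hs₁.1.1) hs₁s₂.le hpos
  have hg₁₂ : g s₁ ≤ g s₂ := hgm (hsub hs₁.1) hs₂ hs₁s₂.le
  linarith

theorem sub_le_max (h : IsSkorokhodSolution R x y z) {T S : ℝ} (hT : 0 ≤ T) (j : n)
    {c r : ℝ} (hr : 0 ≤ r)
    (hz : ∀ s ∈ Icc T S, c - r * (s - T) + (y s j - y T j) ≤ z s j) :
    ∀ s ∈ Icc T S, y s j - y T j ≤ max 0 (r * (s - T) - c) := by
  refine h.sub_le_of_forall_eq_zero hT j (by fun_prop) ?_ (le_max_left _ _) ?_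
  · intro a _ b _ hab
    dsimp only
    gcongr
  · intro s hs hzs
    have := hz s hs
    exact le_max_of_le_right (by linarith)

/-- `max 0 (r (s - T) - c)` is the one-dimensional Skorokhod map of the path
`c - r (s - T)`. -/
theorem sub_eq_max (h : IsSkorokhodSolution R x y z) {T S : ℝ} (hT : 0 ≤ T) (j : n)
    {c r : ℝ} (hr : 0 ≤ r)
    (hz : ∀ s ∈ Icc T S, z s j = c - r * (s - T) + (y s j - y T j)) :
    ∀ s ∈ Icc T S, y s j - y T j = max 0 (r * (s - T) - c) := by
  intro s hs
  refine (h.sub_le_max hT j hr (fun s hs => (hz s hs).ge) s hs).antisymm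
    (max_le (h.sub_nonneg hT hs.1 j) ?_)
  have := h.nonneg (hT.trans hs.1) j
  linarith [hz s hs]

theorem sub_eq_zero_of_le (h : IsSkorokhodSolution R x y z) {T S : ℝ} (hT : 0 ≤ T) (j : n)
    {c r : ℝ} (hr : 0 ≤ r) (hrc : r * (S - T) ≤ c)
    (hz : ∀ s ∈ Icc T S, c - r * (s - T) + (y s j - y T j) ≤ z s j) :
    ∀ s ∈ Icc T S, y s j - y T j = 0 := by
  intro s hs
  refine le_antisymm ?_ (h.sub_nonneg hT hs.1 j)
  refine (h.sub_le_max hT j hr hz s hs).trans (max_le le_rfl ?_)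
  nlinarith [hs.2]

theorem sub_eq_zero_of_add_le (h : IsSkorokhodSolution R x y z) {T S : ℝ} (hT : 0 ≤ T)
    (j : n) (hz : ∀ s ∈ Icc T S, z T j + (y s j - y T j) ≤ z s j) :
    ∀ s ∈ Icc T S, y s j - y T j = 0 :=
  h.sub_eq_zero_of_le hT j (c := z T j) (r := 0) le_rfl (by simpa using h.nonneg hT j)
    fun s hs => by simpa using hz s hs

theorem sub_eq_indC_mul (h : IsSkorokhodSolution R x y z) {T : ℝ} (hT : 0 ≤ T) (j : n)
    {c : ℝ} (P : Prop) [Decidable P] (hP : P → c = 0) (hnP : ¬P → 1 ≤ c)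
    (hz : ∀ s ∈ Icc T (T + 1), z s j = c - (s - T) + (y s j - y T j)) :
    ∀ s ∈ Icc T (T + 1), y s j - y T j = indC P * (s - T) := by
  intro s hs
  rw [h.sub_eq_max hT j zero_le_one (by simpa using hz) s hs]
  by_cases hp : P
  · simp [hp, hP hp, hs.1]
  · simp only [indC, hp, if_false, zero_mul, max_eq_left_iff]
    linarith [hnP hp, hs.2]

end IsSkorokhodSolution

section Rows

variable {m : ℕ}

def Idx.equivSum (m : ℕ) : Idx m ≃
    (Fin 5 ⊕ Fin m ⊕ Fin 2 ⊕ Fin 2 ⊕ (Fin m × Bool × Bool) ⊕ (Fin m × Bool × Bool)) where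
  toFun
    | .A k => .inl k
    | .B j => .inr (.inl j)
    | .C k => .inr (.inr (.inl k))
    | .D k => .inr (.inr (.inr (.inl k)))
    | .E i b c => .inr (.inr (.inr (.inr (.inl (i, b, c)))))
    | .F i b c => .inr (.inr (.inr (.inr (.inr (i, b, c)))))
  invFun
    | .inl k => .A k
    | .inr (.inl j) => .B j
    | .inr (.inr (.inl k)) => .C k
    | .inr (.inr (.inr (.inl k))) => .D k
    | .inr (.inr (.inr (.inr (.inl (i, b, c))))) => .E i b c
    | .inr (.inr (.inr (.inr (.inr (i, b, c))))) => .F i b c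
  left_inv p := by cases p <;> rfl
  right_inv q := by rcases q with k | j | k | k | ⟨i, b, c⟩ | ⟨i, b, c⟩ <;> rfl

theorem Idx.sum_eq (f : Idx m → ℝ) :
    ∑ p, f p = ∑ k, f (.A k) + ∑ j, f (.B j) + ∑ k, f (.C k) + ∑ k, f (.D k)
      + ∑ i, ∑ b, ∑ c, f (.E i b c) + ∑ i, ∑ b, ∑ c, f (.F i b c) := by
  rw [← (Idx.equivSum m).symm.sum_comp f]
  simp [Fintype.sum_sum_type, Fintype.sum_prod_type, Idx.equivSum, add_assoc]

theorem sum_sum_sum_nonneg {f : Fin m → Bool → Bool → ℝ} (hf : ∀ i b c, 0 ≤ f i b c) :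
    0 ≤ ∑ i, ∑ b, ∑ c, f i b c :=
  Finset.sum_nonneg fun i _ => Finset.sum_nonneg fun b _ => Finset.sum_nonneg fun c _ => hf i b c

theorem sum_sum_sum_indC_mul (f : Fin m → Bool → Bool → ℝ) (i : Fin m) (b c : Bool) :
    ∑ i', ∑ b', ∑ c', indC (i' = i ∧ b' = b ∧ c' = c) * f i' b' c' = f i b c := by
  rw [Finset.sum_eq_single i (fun i' _ hi' => by simp [indC, hi']) (by simp)]
  cases b <;> cases c <;> simp [indC]

def CounterMachine.move (M : CounterMachine m) (i : Fin m) (b c : Bool) (k : Fin 2) : ℝ :=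
  if k = 0 then ((M.Γ i b c).2.1 : ℝ) else (M.Γ i b c).2.2

theorem CounterMachine.neg_one_le_move (M : CounterMachine m) (i : Fin m) (b c : Bool)
    (k : Fin 2) : -1 ≤ M.move i b c k := by
  have := M.moves i b c
  simp only [Set.mem_insert_iff, Set.mem_singleton_iff, Prod.ext_iff] at this
  unfold CounterMachine.move
  rcases this with h | h | h | h | h <;> split <;> simp [h.1, h.2]

variable (M : CounterMachine m) (v : Idx m → ℝ)

theorem Rmat_mulVec_A (k : Fin 5) :
    (Rmat M).mulVec v (.A k) = ∑ l, AAmat k l * v (.A l) := by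
  simp [Matrix.mulVec, dotProduct, Idx.sum_eq, Rmat]

theorem Rmat_mulVec_B (j : Fin m) :
    (Rmat M).mulVec v (.B j) = -v (.A 0) + v (.B j)
      + ∑ i, ∑ b, ∑ c, (if (M.Γ i b c).1 = j then 0 else 1) * v (.E i b c) := by
  simp [Matrix.mulVec, dotProduct, Idx.sum_eq, Rmat]

theorem Rmat_mulVec_C (k : Fin 2) :
    (Rmat M).mulVec v (.C k) = -v (.A 0) - v (.A 3) + v (.C k) + v (.D k)
      + ∑ i, ∑ b, ∑ c, (M.move i b c k + 1) * v (.E i b c) := by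
  simp [Matrix.mulVec, dotProduct, Idx.sum_eq, Rmat, Fin.sum_univ_five, CounterMachine.move]
  ring

theorem Rmat_mulVec_D (k : Fin 2) :
    (Rmat M).mulVec v (.D k) = -v (.A 1) + v (.C k) + v (.D k) := by
  simp [Matrix.mulVec, dotProduct, Idx.sum_eq, Rmat]

theorem Rmat_mulVec_E (i : Fin m) (b c : Bool) :
    (Rmat M).mulVec v (.E i b c) = -((bnum b + bnum c) * v (.A 0)) - v (.A 2) - v (.B i)
      + (2 * bnum b - 1) * v (.C 0) + (2 * bnum c - 1) * v (.C 1)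
      + v (.E i b c) + v (.F i b c) := by
  have hE := sum_sum_sum_indC_mul (fun i b c => v (.E i b c)) i b c
  have hF := sum_sum_sum_indC_mul (fun i b c => v (.F i b c)) i b c
  simp only [Matrix.mulVec, dotProduct, Idx.sum_eq, Rmat, indC] at hE hF ⊢
  rw [hE, hF]
  simp [Fin.sum_univ_five]
  ring

theorem Rmat_mulVec_F (i : Fin m) (b c : Bool) :
    (Rmat M).mulVec v (.F i b c) = -((bnum b + bnum c) * v (.A 0)) - v (.A 2)
      - 4 * v (.A 3) + 4 * v (.A 4) - v (.B i)
      + (2 * bnum b - 1) * v (.C 0) + (2 * bnum c - 1) * v (.C 1)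
      + v (.E i b c) + v (.F i b c) := by
  have hE := sum_sum_sum_indC_mul (fun i b c => v (.E i b c)) i b c
  have hF := sum_sum_sum_indC_mul (fun i b c => v (.F i b c)) i b c
  simp only [Matrix.mulVec, dotProduct, Idx.sum_eq, Rmat, indC] at hE hF ⊢
  rw [hE, hF]
  simp [Fin.sum_univ_five]
  ring

end Rows

theorem fluidX_sub {m : ℕ} (i : Fin m) (C₁ C₂ : ℕ) (s T : ℝ) (j : Idx m) :
    fluidX i C₁ C₂ s j - fluidX i C₁ C₂ T j = thetaVec m j * (s - T) := by
  simp only [fluidX]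
  ring

namespace IsSkorokhodSolution

variable {m : ℕ} {M : CounterMachine m} {i0 : Fin m} {C₁0 C₂0 : ℕ} {y z : ℝ → Idx m → ℝ}

theorem apply_A (h : IsSkorokhodSolution (Rmat M) (fluidX i0 C₁0 C₂0) y z) {T s : ℝ}
    (hT : 0 ≤ T) (hs : T ≤ s) (k : Fin 5) :
    z s (.A k) = z T (.A k) - (s - T) + ∑ l, AAmat k l * (y s (.A l) - y T (.A l)) := by
  rw [h.apply_eq hT hs, fluidX_sub, Rmat_mulVec_A]
  simp [thetaVec]
  ring

theorem apply_B (h : IsSkorokhodSolution (Rmat M) (fluidX i0 C₁0 C₂0) y z) {T s : ℝ}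
    (hT : 0 ≤ T) (hs : T ≤ s) (j : Fin m) :
    z s (.B j) = z T (.B j) - (y s (.A 0) - y T (.A 0)) + (y s (.B j) - y T (.B j))
      + ∑ i, ∑ b, ∑ c, (if (M.Γ i b c).1 = j then 0 else 1)
          * (y s (.E i b c) - y T (.E i b c)) := by
  rw [h.apply_eq hT hs, fluidX_sub, Rmat_mulVec_B]
  simp [thetaVec]
  ring

theorem apply_C (h : IsSkorokhodSolution (Rmat M) (fluidX i0 C₁0 C₂0) y z) {T s : ℝ}
    (hT : 0 ≤ T) (hs : T ≤ s) (k : Fin 2) :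
    z s (.C k) = z T (.C k) - (y s (.A 0) - y T (.A 0)) - (y s (.A 3) - y T (.A 3))
      + (y s (.C k) - y T (.C k)) + (y s (.D k) - y T (.D k))
      + ∑ i, ∑ b, ∑ c, (M.move i b c k + 1) * (y s (.E i b c) - y T (.E i b c)) := by
  rw [h.apply_eq hT hs, fluidX_sub, Rmat_mulVec_C]
  simp [thetaVec]
  ring

theorem apply_D (h : IsSkorokhodSolution (Rmat M) (fluidX i0 C₁0 C₂0) y z) {T s : ℝ}
    (hT : 0 ≤ T) (hs : T ≤ s) (k : Fin 2) :
    z s (.D k) = z T (.D k) - (y s (.A 1) - y T (.A 1)) + (y s (.C k) - y T (.C k))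
      + (y s (.D k) - y T (.D k)) := by
  rw [h.apply_eq hT hs, fluidX_sub, Rmat_mulVec_D]
  simp [thetaVec]
  ring

theorem apply_E (h : IsSkorokhodSolution (Rmat M) (fluidX i0 C₁0 C₂0) y z) {T s : ℝ}
    (hT : 0 ≤ T) (hs : T ≤ s) (i : Fin m) (b c : Bool) :
    z s (.E i b c) = z T (.E i b c) - (bnum b + bnum c) * (y s (.A 0) - y T (.A 0))
      - (y s (.A 2) - y T (.A 2)) - (y s (.B i) - y T (.B i))
      + (2 * bnum b - 1) * (y s (.C 0) - y T (.C 0))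
      + (2 * bnum c - 1) * (y s (.C 1) - y T (.C 1))
      + (y s (.E i b c) - y T (.E i b c)) + (y s (.F i b c) - y T (.F i b c)) := by
  rw [h.apply_eq hT hs, fluidX_sub, Rmat_mulVec_E]
  simp [thetaVec]
  ring

theorem apply_F (h : IsSkorokhodSolution (Rmat M) (fluidX i0 C₁0 C₂0) y z) {T s : ℝ}
    (hT : 0 ≤ T) (hs : T ≤ s) (i : Fin m) (b c : Bool) :
    z s (.F i b c) = z T (.F i b c) - (bnum b + bnum c) * (y s (.A 0) - y T (.A 0))
      - (y s (.A 2) - y T (.A 2)) - 4 * (y s (.A 3) - y T (.A 3))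
      + 4 * (y s (.A 4) - y T (.A 4)) - (y s (.B i) - y T (.B i))
      + (2 * bnum b - 1) * (y s (.C 0) - y T (.C 0))
      + (2 * bnum c - 1) * (y s (.C 1) - y T (.C 1))
      + (y s (.E i b c) - y T (.E i b c)) + (y s (.F i b c) - y T (.F i b c)) := by
  rw [h.apply_eq hT hs, fluidX_sub, Rmat_mulVec_F]
  simp [thetaVec]
  ring

end IsSkorokhodSolution

theorem AAmat_apply (k l : Fin 5) : AAmat k l = ![1, 2, 1, 1, 0] (l - k) := by
  fin_cases k <;> fin_cases l <;> rfl

theorem AAmat_nonneg (k l : Fin 5) : 0 ≤ AAmat k l := by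
  rw [AAmat_apply]; generalize l - k = d; fin_cases d <;> norm_num

theorem AAmat_self (k : Fin 5) : AAmat k k = 1 := by simp [AAmat_apply]

theorem AAmat_sub_one_self (p : Fin 5) : AAmat (p - 1) p = 2 := by simp [AAmat_apply]

theorem AAmat_self_sub_one (p : Fin 5) : AAmat p (p - 1) = 0 := by
  rw [AAmat_apply, sub_sub_cancel_left]; rfl

/-- The `A`-block of `z (5t + p)`. -/
def aState (p k : Fin 5) : ℝ := if k = p - 1 ∨ k = p then 0 else 1

theorem aState_add_one (p k : Fin 5) : aState p k - 1 + AAmat k p = aState (p + 1) k := by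
  fin_cases p <;> fin_cases k <;> norm_num +decide [aState, AAmat]

namespace IsSkorokhodSolution

variable {m : ℕ} {M : CounterMachine m} {i0 : Fin m} {C₁0 C₂0 : ℕ} {y z : ℝ → Idx m → ℝ}

theorem sub_A (h : IsSkorokhodSolution (Rmat M) (fluidX i0 C₁0 C₂0) y z) {T : ℝ}
    (hT : 0 ≤ T) (p : Fin 5) (hzT : ∀ k, z T (.A k) = aState p k) :
    (∀ s ∈ Icc T (T + 1), y s (.A p) - y T (.A p) = s - T) ∧
      ∀ k ≠ p, ∀ s ∈ Icc T (T + 1), y s (.A k) - y T (.A k) = 0 := by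
  have hnn : ∀ s ∈ Icc T (T + 1), ∀ l, 0 ≤ y s (.A l) - y T (.A l) :=
    fun s hs l => h.sub_nonneg hT hs.1 _
  -- the coordinates starting at level `1` cannot reach `0` before `T + 1`
  have hfar : ∀ k, k ≠ p - 1 → k ≠ p → ∀ s ∈ Icc T (T + 1), y s (.A k) - y T (.A k) = 0 := by
    intro k hk₁ hk₂
    refine h.sub_eq_zero_of_le hT (.A k) zero_le_one (c := 1) (by simp) fun s hs => ?_
    have := Finset.single_le_sum (fun l _ => mul_nonneg (AAmat_nonneg k l) (hnn s hs l))
      (Finset.mem_univ k)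
    rw [h.apply_A hT hs.1, hzT, aState, if_neg (by tauto)]
    rw [AAmat_self] at this
    linarith
  have hsum : ∀ s ∈ Icc T (T + 1), ∀ k, ∑ l, AAmat k l * (y s (.A l) - y T (.A l)) =
      AAmat k (p - 1) * (y s (.A (p - 1)) - y T (.A (p - 1)))
        + AAmat k p * (y s (.A p) - y T (.A p)) :=
    fun s hs k => Fintype.sum_eq_add _ _ (by simp)
      fun l ⟨hl₁, hl₂⟩ => by rw [hfar l hl₁ hl₂ s hs, mul_zero]
  have hact : ∀ s ∈ Icc T (T + 1), y s (.A p) - y T (.A p) = s - T := by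
    intro s hs
    rw [h.sub_eq_max hT (.A p) zero_le_one (c := 0) (fun s hs => by
      rw [h.apply_A hT hs.1, hzT, hsum s hs, aState, if_pos (Or.inr rfl),
        AAmat_self_sub_one, AAmat_self]
      ring) s hs]
    simp [hs.1]
  have hprev : ∀ s ∈ Icc T (T + 1), y s (.A (p - 1)) - y T (.A (p - 1)) = 0 :=
    h.sub_eq_zero_of_add_le hT (.A (p - 1)) fun s hs => by
      rw [h.apply_A hT hs.1, hsum s hs, hact s hs, AAmat_sub_one_self, AAmat_self]
      linarith [hs.1]
  refine ⟨hact, fun k hk => ?_⟩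
  by_cases hk₁ : k = p - 1
  · exact hk₁ ▸ hprev
  · exact hfar k hk₁ hk

theorem sub_A_eq (h : IsSkorokhodSolution (Rmat M) (fluidX i0 C₁0 C₂0) y z) {T : ℝ}
    (hT : 0 ≤ T) (p : Fin 5) (hzT : ∀ k, z T (.A k) = aState p k) :
    ∀ s ∈ Icc T (T + 1), ∀ k, y s (.A k) - y T (.A k) = indC (k = p) * (s - T) := by
  obtain ⟨hp, hk⟩ := h.sub_A hT p hzT
  intro s hs k
  by_cases hkp : k = p
  · simp [hkp, hp s hs]
  · simp [hkp, hk k hkp s hs]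

end IsSkorokhodSolution

section Configurations

variable {m : ℕ}

def counter (C₁ C₂ : ℕ) (k : Fin 2) : ℕ := if k = 0 then C₁ else C₂

abbrev IsRead (i : Fin m) (C₁ C₂ : ℕ) (i' : Fin m) (b c : Bool) : Prop :=
  i' = i ∧ b = decide (0 < C₁) ∧ c = decide (0 < C₂)

theorem encCfg_A (i : Fin m) (C₁ C₂ : ℕ) (k : Fin 5) : encCfg i C₁ C₂ (.A k) = aState 0 k := by
  fin_cases k <;> simp +decide [encCfg, aState]

theorem encCfg_C (i : Fin m) (C₁ C₂ : ℕ) (k : Fin 2) :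
    encCfg i C₁ C₂ (.C k) = counter C₁ C₂ k := by
  simp only [encCfg, counter]; split <;> rfl

theorem CounterMachine.counter_add_move_nonneg (M : CounterMachine m) (i : Fin m)
    (C₁ C₂ : ℕ) (k : Fin 2) :
    0 ≤ (counter C₁ C₂ k : ℝ) + M.move i (decide (0 < C₁)) (decide (0 < C₂)) k := by
  have hmove := M.neg_one_le_move i (decide (0 < C₁)) (decide (0 < C₂)) k
  have hcons := M.consistent i (decide (0 < C₁)) (decide (0 < C₂))
  rcases Nat.eq_zero_or_pos (counter C₁ C₂ k) with h0 | hpos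
  · fin_cases k <;> simp_all [counter, CounterMachine.move]
  · have : (1 : ℝ) ≤ counter C₁ C₂ k := by exact_mod_cast hpos
    linarith

theorem CounterMachine.counter_step (M : CounterMachine m) (i : Fin m) (C₁ C₂ : ℕ)
    (k : Fin 2) :
    (counter (M.step (i, C₁, C₂)).2.1 (M.step (i, C₁, C₂)).2.2 k : ℝ) =
      counter C₁ C₂ k + M.move i (decide (0 < C₁)) (decide (0 < C₂)) k := by
  have hnn := M.counter_add_move_nonneg i C₁ C₂ k
  fin_cases k <;> simp [CounterMachine.step, counter, CounterMachine.move] at hnn ⊢ <;>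
    rw [← Int.cast_natCast, Int.toNat_of_nonneg (by exact_mod_cast hnn)] <;> push_cast <;> rfl

theorem Upsilon_eq (i : Fin m) (C₁ C₂ : ℕ) (i' : Fin m) (b c : Bool) :
    Upsilon i C₁ C₂ i' b c =
      -(indC (i' = i) + indC (b = decide (0 < C₁)) + indC (c = decide (0 < C₂))) := by
  by_cases h₁ : C₁ = 0 <;> by_cases h₂ : C₂ = 0 <;> cases b <;> cases c <;>
    simp [Upsilon, indC, bnum, h₁, h₂, Nat.pos_iff_ne_zero] <;> ring

theorem Upsilon_of_isRead (i : Fin m) (C₁ C₂ : ℕ) :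
    Upsilon i C₁ C₂ i (decide (0 < C₁)) (decide (0 < C₂)) = -3 := by
  simp [Upsilon_eq]; norm_num

theorem neg_three_le_Upsilon (i : Fin m) (C₁ C₂ : ℕ) (i' : Fin m) (b c : Bool) :
    -3 ≤ Upsilon i C₁ C₂ i' b c := by
  rw [Upsilon_eq]
  linarith [indC_le_one (i' = i), indC_le_one (b = decide (0 < C₁)),
    indC_le_one (c = decide (0 < C₂))]

theorem Upsilon_nonpos (i : Fin m) (C₁ C₂ : ℕ) (i' : Fin m) (b c : Bool) :
    Upsilon i C₁ C₂ i' b c ≤ 0 := by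
  rw [Upsilon_eq]
  linarith [indC_nonneg (i' = i), indC_nonneg (b = decide (0 < C₁)),
    indC_nonneg (c = decide (0 < C₂))]

theorem neg_two_le_Upsilon (i : Fin m) (C₁ C₂ : ℕ) (i' : Fin m) (b c : Bool)
    (hread : ¬IsRead i C₁ C₂ i' b c) : -2 ≤ Upsilon i C₁ C₂ i' b c := by
  rw [Upsilon_eq]
  by_cases hi : i' = i <;> by_cases hb : b = decide (0 < C₁) <;>
    by_cases hc : c = decide (0 < C₂) <;> simp_all [indC] <;> norm_num

theorem neg_le_two_mul_bnum_sub_one_mul_sub (b : Bool) {d u : ℝ} (hd : 0 ≤ d) (hdu : d ≤ u) :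
    -u ≤ (2 * bnum b - 1) * d - bnum b * u := by
  cases b <;> simp [bnum] <;> linarith

end Configurations

section Stages

variable {m : ℕ}

/-! `stageₚ` is `z (5t + p)` and `incrₚ u` is `y (5t + p + u) - y (5t + p)` for `u ∈ [0, 1]`,
when `z (5t)` encodes the configuration `(i, C₁, C₂)`. -/

def stage₁ (i : Fin m) (C₁ C₂ : ℕ) : Idx m → ℝ
  | .A k => aState 1 k
  | .B _ => 0
  | .C k => counter C₁ C₂ k - 1 + indC (counter C₁ C₂ k = 0)
  | .D k => indC (counter C₁ C₂ k = 0)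
  | .E i' b c => 3 + Upsilon i C₁ C₂ i' b c
  | .F i' b c => 4 + Upsilon i C₁ C₂ i' b c

def stage₂ (i : Fin m) (C₁ C₂ : ℕ) : Idx m → ℝ
  | .A k => aState 2 k
  | .B _ => 0
  | .C k => counter C₁ C₂ k
  | .D _ => 0
  | .E i' b c => 3 + Upsilon i C₁ C₂ i' b c
  | .F i' b c => 4 + Upsilon i C₁ C₂ i' b c

def stage₃ (M : CounterMachine m) (i : Fin m) (C₁ C₂ : ℕ) : Idx m → ℝ
  | .A k => aState 3 k
  | .B j => if j = (M.Γ i (decide (0 < C₁)) (decide (0 < C₂))).1 then 0 else 1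
  | .C k => counter C₁ C₂ k + M.move i (decide (0 < C₁)) (decide (0 < C₂)) k + 1
  | .D _ => 0
  | .E i' b c => 2 + Upsilon i C₁ C₂ i' b c + indC (IsRead i C₁ C₂ i' b c)
  | .F i' b c => 3 + Upsilon i C₁ C₂ i' b c + indC (IsRead i C₁ C₂ i' b c)

def stage₄ (M : CounterMachine m) (i : Fin m) (C₁ C₂ : ℕ) : Idx m → ℝ
  | .A k => aState 4 k
  | .B j => if j = (M.Γ i (decide (0 < C₁)) (decide (0 < C₂))).1 then 0 else 1
  | .C k => counter C₁ C₂ k + M.move i (decide (0 < C₁)) (decide (0 < C₂)) k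
  | .D _ => 0
  | .E _ _ _ => 3
  | .F _ _ _ => 0

def incr₀ (i : Fin m) (C₁ C₂ : ℕ) (u : ℝ) : Idx m → ℝ
  | .A k => indC (k = 0) * u
  | .B j => indC (j = i) * u
  | .C k => indC (counter C₁ C₂ k = 0) * u
  | _ => 0

def incr₁ (C₁ C₂ : ℕ) (u : ℝ) : Idx m → ℝ
  | .A k => indC (k = 1) * u
  | .D k => indC (counter C₁ C₂ k ≠ 0) * u
  | _ => 0

def incr₂ (i : Fin m) (C₁ C₂ : ℕ) (u : ℝ) : Idx m → ℝ
  | .A k => indC (k = 2) * u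
  | .E i' b c => indC (IsRead i C₁ C₂ i' b c) * u
  | _ => 0

def incr₃ (i : Fin m) (C₁ C₂ : ℕ) (u : ℝ) : Idx m → ℝ
  | .A k => indC (k = 3) * u
  | .F i' b c => max 0 (4 * u - (3 + Upsilon i C₁ C₂ i' b c + indC (IsRead i C₁ C₂ i' b c)))
  | _ => 0

def incr₄ (u : ℝ) : Idx m → ℝ
  | .A k => indC (k = 4) * u
  | _ => 0

end Stages

namespace IsSkorokhodSolution

variable {m : ℕ} {M : CounterMachine m} {i0 : Fin m} {C₁0 C₂0 : ℕ} {y z : ℝ → Idx m → ℝ}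
  {T S : ℝ}

theorem sub_B_eq_zero (h : IsSkorokhodSolution (Rmat M) (fluidX i0 C₁0 C₂0) y z) (hT : 0 ≤ T)
    (hA₀ : ∀ s ∈ Icc T S, y s (.A 0) - y T (.A 0) = 0) :
    ∀ j, ∀ s ∈ Icc T S, y s (.B j) - y T (.B j) = 0 := fun j =>
  h.sub_eq_zero_of_add_le hT _ fun s hs => by
    have := sum_sum_sum_nonneg fun i b c => mul_nonneg
      (by split <;> norm_num : (0 : ℝ) ≤ if (M.Γ i b c).1 = j then 0 else 1)
      (h.sub_nonneg hT hs.1 (.E i b c))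
    rw [h.apply_B hT hs.1, hA₀ s hs]
    linarith

theorem sub_C_eq_zero (h : IsSkorokhodSolution (Rmat M) (fluidX i0 C₁0 C₂0) y z) (hT : 0 ≤ T)
    (hA₀ : ∀ s ∈ Icc T S, y s (.A 0) - y T (.A 0) = 0)
    (hA₃ : ∀ s ∈ Icc T S, y s (.A 3) - y T (.A 3) = 0) :
    ∀ k, ∀ s ∈ Icc T S, y s (.C k) - y T (.C k) = 0 := fun k =>
  h.sub_eq_zero_of_add_le hT _ fun s hs => by
    have := sum_sum_sum_nonneg fun i b c => mul_nonneg
      (by linarith [M.neg_one_le_move i b c k] : 0 ≤ M.move i b c k + 1)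
      (h.sub_nonneg hT hs.1 (.E i b c))
    rw [h.apply_C hT hs.1, hA₀ s hs, hA₃ s hs]
    linarith [h.sub_nonneg hT hs.1 (.D k)]

theorem sub_D_eq_zero (h : IsSkorokhodSolution (Rmat M) (fluidX i0 C₁0 C₂0) y z) (hT : 0 ≤ T)
    (hA₁ : ∀ s ∈ Icc T S, y s (.A 1) - y T (.A 1) = 0) :
    ∀ k, ∀ s ∈ Icc T S, y s (.D k) - y T (.D k) = 0 := fun k =>
  h.sub_eq_zero_of_add_le hT _ fun s hs => by
    rw [h.apply_D hT hs.1, hA₁ s hs]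
    linarith [h.sub_nonneg hT hs.1 (.C k)]

theorem sub_E_eq_zero (h : IsSkorokhodSolution (Rmat M) (fluidX i0 C₁0 C₂0) y z) (hT : 0 ≤ T)
    (hA₀ : ∀ s ∈ Icc T S, y s (.A 0) - y T (.A 0) = 0)
    (hA₂ : ∀ s ∈ Icc T S, y s (.A 2) - y T (.A 2) = 0)
    (hB : ∀ j, ∀ s ∈ Icc T S, y s (.B j) - y T (.B j) = 0)
    (hC : ∀ k, ∀ s ∈ Icc T S, y s (.C k) - y T (.C k) = 0) :
    ∀ i b c, ∀ s ∈ Icc T S, y s (.E i b c) - y T (.E i b c) = 0 := fun i b c =>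
  h.sub_eq_zero_of_add_le hT _ fun s hs => by
    rw [h.apply_E hT hs.1, hA₀ s hs, hA₂ s hs, hB i s hs, hC 0 s hs, hC 1 s hs]
    linarith [h.sub_nonneg hT hs.1 (.F i b c)]

theorem sub_F_eq_zero (h : IsSkorokhodSolution (Rmat M) (fluidX i0 C₁0 C₂0) y z) (hT : 0 ≤ T)
    (hA₀ : ∀ s ∈ Icc T S, y s (.A 0) - y T (.A 0) = 0)
    (hA₂ : ∀ s ∈ Icc T S, y s (.A 2) - y T (.A 2) = 0)
    (hA₃ : ∀ s ∈ Icc T S, y s (.A 3) - y T (.A 3) = 0)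
    (hB : ∀ j, ∀ s ∈ Icc T S, y s (.B j) - y T (.B j) = 0)
    (hC : ∀ k, ∀ s ∈ Icc T S, y s (.C k) - y T (.C k) = 0) :
    ∀ i b c, ∀ s ∈ Icc T S, y s (.F i b c) - y T (.F i b c) = 0 := fun i b c =>
  h.sub_eq_zero_of_add_le hT _ fun s hs => by
    rw [h.apply_F hT hs.1, hA₀ s hs, hA₂ s hs, hA₃ s hs, hB i s hs, hC 0 s hs, hC 1 s hs]
    linarith [h.sub_nonneg hT hs.1 (.E i b c), h.sub_nonneg hT hs.1 (.A 4)]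

theorem sub_B_le (h : IsSkorokhodSolution (Rmat M) (fluidX i0 C₁0 C₂0) y z) (hT : 0 ≤ T)
    (hA₀ : ∀ s ∈ Icc T S, y s (.A 0) - y T (.A 0) = s - T) :
    ∀ j, ∀ s ∈ Icc T S, y s (.B j) - y T (.B j) ≤ s - T := by
  intro j s hs
  refine (h.sub_le_max hT (.B j) zero_le_one (c := 0) (fun s hs => ?_) s hs).trans
    (by simp [hs.1])
  have := sum_sum_sum_nonneg fun i b c => mul_nonneg
    (by split <;> norm_num : (0 : ℝ) ≤ if (M.Γ i b c).1 = j then 0 else 1)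
    (h.sub_nonneg hT hs.1 (.E i b c))
  rw [h.apply_B hT hs.1, hA₀ s hs]
  linarith [h.nonneg hT (.B j)]

theorem sub_C_le (h : IsSkorokhodSolution (Rmat M) (fluidX i0 C₁0 C₂0) y z) (hT : 0 ≤ T)
    (hA₀ : ∀ s ∈ Icc T S, y s (.A 0) - y T (.A 0) = s - T)
    (hA₃ : ∀ s ∈ Icc T S, y s (.A 3) - y T (.A 3) = 0) :
    ∀ k, ∀ s ∈ Icc T S, y s (.C k) - y T (.C k) ≤ s - T := by
  intro k s hs
  refine (h.sub_le_max hT (.C k) zero_le_one (c := 0) (fun s hs => ?_) s hs).trans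
    (by simp [hs.1])
  have := sum_sum_sum_nonneg fun i b c => mul_nonneg
    (by linarith [M.neg_one_le_move i b c k] : 0 ≤ M.move i b c k + 1)
    (h.sub_nonneg hT hs.1 (.E i b c))
  rw [h.apply_C hT hs.1, hA₀ s hs, hA₃ s hs]
  linarith [h.nonneg hT (.C k), h.sub_nonneg hT hs.1 (.D k)]

/-- `y_{A,0}`, `y_B` and `y_C` push `z_E` at a total rate of at most `3`. -/
theorem sub_E_eq_zero_of_three_le (h : IsSkorokhodSolution (Rmat M) (fluidX i0 C₁0 C₂0) y z)
    (hT : 0 ≤ T) (hA₀ : ∀ s ∈ Icc T (T + 1), y s (.A 0) - y T (.A 0) = s - T)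
    (hA₂ : ∀ s ∈ Icc T (T + 1), y s (.A 2) - y T (.A 2) = 0)
    (hB : ∀ j, ∀ s ∈ Icc T (T + 1), y s (.B j) - y T (.B j) ≤ s - T)
    (hC : ∀ k, ∀ s ∈ Icc T (T + 1), y s (.C k) - y T (.C k) ≤ s - T) (i : Fin m) (b c : Bool)
    (hzT : 3 ≤ z T (.E i b c)) :
    ∀ s ∈ Icc T (T + 1), y s (.E i b c) - y T (.E i b c) = 0 :=
  h.sub_eq_zero_of_le hT _ (r := 3) (c := 3) (by norm_num) (by norm_num) fun s hs => by
    have := neg_le_two_mul_bnum_sub_one_mul_sub b (h.sub_nonneg hT hs.1 (.C 0)) (hC 0 s hs)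
    have := neg_le_two_mul_bnum_sub_one_mul_sub c (h.sub_nonneg hT hs.1 (.C 1)) (hC 1 s hs)
    rw [h.apply_E hT hs.1, hA₀ s hs, hA₂ s hs]
    linarith [hB i s hs, h.sub_nonneg hT hs.1 (.F i b c)]

theorem sub_F_eq_zero_of_three_le (h : IsSkorokhodSolution (Rmat M) (fluidX i0 C₁0 C₂0) y z)
    (hT : 0 ≤ T) (hA₀ : ∀ s ∈ Icc T (T + 1), y s (.A 0) - y T (.A 0) = s - T)
    (hA₂ : ∀ s ∈ Icc T (T + 1), y s (.A 2) - y T (.A 2) = 0)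
    (hA₃ : ∀ s ∈ Icc T (T + 1), y s (.A 3) - y T (.A 3) = 0)
    (hB : ∀ j, ∀ s ∈ Icc T (T + 1), y s (.B j) - y T (.B j) ≤ s - T)
    (hC : ∀ k, ∀ s ∈ Icc T (T + 1), y s (.C k) - y T (.C k) ≤ s - T) (i : Fin m) (b c : Bool)
    (hzT : 3 ≤ z T (.F i b c)) :
    ∀ s ∈ Icc T (T + 1), y s (.F i b c) - y T (.F i b c) = 0 :=
  h.sub_eq_zero_of_le hT _ (r := 3) (c := 3) (by norm_num) (by norm_num) fun s hs => by
    have := neg_le_two_mul_bnum_sub_one_mul_sub b (h.sub_nonneg hT hs.1 (.C 0)) (hC 0 s hs)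
    have := neg_le_two_mul_bnum_sub_one_mul_sub c (h.sub_nonneg hT hs.1 (.C 1)) (hC 1 s hs)
    rw [h.apply_F hT hs.1, hA₀ s hs, hA₂ s hs, hA₃ s hs]
    linarith [hB i s hs, h.sub_nonneg hT hs.1 (.E i b c), h.sub_nonneg hT hs.1 (.A 4)]

variable {i : Fin m} {C₁ C₂ : ℕ}

theorem sub_stage₀ (h : IsSkorokhodSolution (Rmat M) (fluidX i0 C₁0 C₂0) y z) (hT : 0 ≤ T)
    (hzT : z T = encCfg i C₁ C₂) :
    ∀ s ∈ Icc T (T + 1), ∀ j, y s j - y T j = incr₀ i C₁ C₂ (s - T) j := by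
  have hzA : ∀ k, z T (.A k) = aState 0 k := fun k => by rw [hzT, encCfg_A]
  have hA := h.sub_A_eq hT 0 hzA
  obtain ⟨hA₀, hA'⟩ := h.sub_A hT 0 hzA
  have hB_le := h.sub_B_le hT hA₀
  have hC_le := h.sub_C_le hT hA₀ (hA' 3 (by decide))
  have hD := h.sub_D_eq_zero hT (hA' 1 (by decide))
  have hE := fun i' b c => h.sub_E_eq_zero_of_three_le hT hA₀ (hA' 2 (by decide)) hB_le hC_le
    i' b c (by simp [hzT, encCfg])
  have hF := fun i' b c => h.sub_F_eq_zero_of_three_le hT hA₀ (hA' 2 (by decide))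
    (hA' 3 (by decide)) hB_le hC_le i' b c (by norm_num [hzT, encCfg])
  have hB : ∀ j, ∀ s ∈ Icc T (T + 1), y s (.B j) - y T (.B j) = indC (j = i) * (s - T) :=
    fun j => h.sub_eq_indC_mul hT _ _ (c := if j = i then 0 else 1) (by simp_all)
      (by simp_all) fun s hs => by
        simp [h.apply_B hT hs.1, hzT, hA₀ s hs, hE _ _ _ s hs, encCfg]
  have hC : ∀ k, ∀ s ∈ Icc T (T + 1),
      y s (.C k) - y T (.C k) = indC (counter C₁ C₂ k = 0) * (s - T) :=
    fun k => h.sub_eq_indC_mul hT _ _ (c := counter C₁ C₂ k) (by simp_all)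
      (fun h0 => by exact_mod_cast Nat.one_le_iff_ne_zero.2 h0) fun s hs => by
        simp [h.apply_C hT hs.1, hzT, hA₀ s hs, hA' 3 (by decide) s hs, hD k s hs,
          hE _ _ _ s hs, encCfg_C]
  rintro s hs (k | j | k | k | ⟨i', b, c⟩ | ⟨i', b, c⟩)
  exacts [hA s hs k, hB j s hs, hC k s hs, hD k s hs, hE i' b c s hs, hF i' b c s hs]

theorem sub_stage₁ (h : IsSkorokhodSolution (Rmat M) (fluidX i0 C₁0 C₂0) y z) (hT : 0 ≤ T)
    (hzT : z T = stage₁ i C₁ C₂) :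
    ∀ s ∈ Icc T (T + 1), ∀ j, y s j - y T j = incr₁ C₁ C₂ (s - T) j := by
  have hzA : ∀ k, z T (.A k) = aState 1 k := fun k => by rw [hzT]; rfl
  have hA := h.sub_A_eq hT 1 hzA
  obtain ⟨hA₁, hA'⟩ := h.sub_A hT 1 hzA
  have hB := h.sub_B_eq_zero hT (hA' 0 (by decide))
  have hC := h.sub_C_eq_zero hT (hA' 0 (by decide)) (hA' 3 (by decide))
  have hE := h.sub_E_eq_zero hT (hA' 0 (by decide)) (hA' 2 (by decide)) hB hC
  have hF := h.sub_F_eq_zero hT (hA' 0 (by decide)) (hA' 2 (by decide)) (hA' 3 (by decide)) hB hC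
  have hD : ∀ k, ∀ s ∈ Icc T (T + 1),
      y s (.D k) - y T (.D k) = indC (counter C₁ C₂ k ≠ 0) * (s - T) := fun k =>
    h.sub_eq_indC_mul hT _ _ (c := indC (counter C₁ C₂ k = 0)) (by simp_all [indC])
      (by simp_all [indC]) fun s hs => by
        rw [h.apply_D hT hs.1, hzT, hA₁ s hs, hC k s hs]
        simp only [stage₁]
        ring
  rintro s hs (k | j | k | k | ⟨i', b, c⟩ | ⟨i', b, c⟩)
  exacts [hA s hs k, hB j s hs, hC k s hs, hD k s hs, hE i' b c s hs, hF i' b c s hs]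

theorem sub_stage₂ (h : IsSkorokhodSolution (Rmat M) (fluidX i0 C₁0 C₂0) y z) (hT : 0 ≤ T)
    (hzT : z T = stage₂ i C₁ C₂) :
    ∀ s ∈ Icc T (T + 1), ∀ j, y s j - y T j = incr₂ i C₁ C₂ (s - T) j := by
  have hzA : ∀ k, z T (.A k) = aState 2 k := fun k => by rw [hzT]; rfl
  have hA := h.sub_A_eq hT 2 hzA
  obtain ⟨hA₂, hA'⟩ := h.sub_A hT 2 hzA
  have hB := h.sub_B_eq_zero hT (hA' 0 (by decide))
  have hC := h.sub_C_eq_zero hT (hA' 0 (by decide)) (hA' 3 (by decide))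
  have hD := h.sub_D_eq_zero hT (hA' 1 (by decide))
  -- `F` starts at level `4 + Υ ≥ 1` and is pushed at unit rate
  have hF : ∀ i' b c, ∀ s ∈ Icc T (T + 1), y s (.F i' b c) - y T (.F i' b c) = 0 :=
    fun i' b c => h.sub_eq_zero_of_le hT _ (r := 1) (c := 1) (by norm_num) (by norm_num)
      fun s hs => by
        rw [h.apply_F hT hs.1, hzT, hA' 0 (by decide) s hs, hA₂ s hs, hA' 3 (by decide) s hs,
          hA' 4 (by decide) s hs, hB i' s hs, hC 0 s hs, hC 1 s hs]
        simp only [stage₂]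
        linarith [neg_three_le_Upsilon i C₁ C₂ i' b c, h.sub_nonneg hT hs.1 (.E i' b c)]
  have hE : ∀ i' b c, ∀ s ∈ Icc T (T + 1),
      y s (.E i' b c) - y T (.E i' b c) = indC (IsRead i C₁ C₂ i' b c) * (s - T) :=
    fun i' b c => h.sub_eq_indC_mul hT _ _ (c := 3 + Upsilon i C₁ C₂ i' b c)
      (fun ⟨hi, hb, hc⟩ => by rw [hi, hb, hc, Upsilon_of_isRead]; norm_num)
      (fun hread => by linarith [neg_two_le_Upsilon i C₁ C₂ i' b c hread]) fun s hs => by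
        rw [h.apply_E hT hs.1, hzT, hA' 0 (by decide) s hs, hA₂ s hs, hB i' s hs, hC 0 s hs,
          hC 1 s hs, hF i' b c s hs]
        simp only [stage₂]
        ring
  rintro s hs (k | j | k | k | ⟨i', b, c⟩ | ⟨i', b, c⟩)
  exacts [hA s hs k, hB j s hs, hC k s hs, hD k s hs, hE i' b c s hs, hF i' b c s hs]

theorem sub_stage₃ (h : IsSkorokhodSolution (Rmat M) (fluidX i0 C₁0 C₂0) y z) (hT : 0 ≤ T)
    (hzT : z T = stage₃ M i C₁ C₂) :
    ∀ s ∈ Icc T (T + 1), ∀ j, y s j - y T j = incr₃ i C₁ C₂ (s - T) j := by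
  have hzA : ∀ k, z T (.A k) = aState 3 k := fun k => by rw [hzT]; rfl
  have hA := h.sub_A_eq hT 3 hzA
  obtain ⟨hA₃, hA'⟩ := h.sub_A hT 3 hzA
  have hB := h.sub_B_eq_zero hT (hA' 0 (by decide))
  have hD := h.sub_D_eq_zero hT (hA' 1 (by decide))
  -- `C` starts at level at least `1` and is pushed at unit rate
  have hC : ∀ k, ∀ s ∈ Icc T (T + 1), y s (.C k) - y T (.C k) = 0 :=
    fun k => h.sub_eq_zero_of_le hT _ (r := 1) (c := 1) (by norm_num) (by norm_num)
      fun s hs => by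
        have := sum_sum_sum_nonneg fun i b c => mul_nonneg
          (by linarith [M.neg_one_le_move i b c k] : 0 ≤ M.move i b c k + 1)
          (h.sub_nonneg hT hs.1 (.E i b c))
        rw [h.apply_C hT hs.1, hzT, hA' 0 (by decide) s hs, hA₃ s hs]
        simp only [stage₃]
        linarith [M.counter_add_move_nonneg i C₁ C₂ k, h.sub_nonneg hT hs.1 (.D k)]
  have hE := h.sub_E_eq_zero hT (hA' 0 (by decide)) (hA' 2 (by decide)) hB hC
  have hF : ∀ i' b c, ∀ s ∈ Icc T (T + 1), y s (.F i' b c) - y T (.F i' b c) =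
      max 0 (4 * (s - T) - (3 + Upsilon i C₁ C₂ i' b c + indC (IsRead i C₁ C₂ i' b c))) :=
    fun i' b c => h.sub_eq_max hT _ (by norm_num) fun s hs => by
      rw [h.apply_F hT hs.1, hzT, hA' 0 (by decide) s hs, hA' 2 (by decide) s hs, hA₃ s hs,
        hA' 4 (by decide) s hs, hB i' s hs, hC 0 s hs, hC 1 s hs, hE i' b c s hs]
      simp only [stage₃]
      ring
  rintro s hs (k | j | k | k | ⟨i', b, c⟩ | ⟨i', b, c⟩)
  exacts [hA s hs k, hB j s hs, hC k s hs, hD k s hs, hE i' b c s hs, hF i' b c s hs]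

theorem sub_stage₄ (h : IsSkorokhodSolution (Rmat M) (fluidX i0 C₁0 C₂0) y z) (hT : 0 ≤ T)
    (hzT : z T = stage₄ M i C₁ C₂) :
    ∀ s ∈ Icc T (T + 1), ∀ j, y s j - y T j = incr₄ (s - T) j := by
  have hzA : ∀ k, z T (.A k) = aState 4 k := fun k => by rw [hzT]; rfl
  have hA := h.sub_A_eq hT 4 hzA
  obtain ⟨-, hA'⟩ := h.sub_A hT 4 hzA
  have hB := h.sub_B_eq_zero hT (hA' 0 (by decide))
  have hC := h.sub_C_eq_zero hT (hA' 0 (by decide)) (hA' 3 (by decide))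
  have hD := h.sub_D_eq_zero hT (hA' 1 (by decide))
  have hE := h.sub_E_eq_zero hT (hA' 0 (by decide)) (hA' 2 (by decide)) hB hC
  have hF := h.sub_F_eq_zero hT (hA' 0 (by decide)) (hA' 2 (by decide)) (hA' 3 (by decide)) hB hC
  rintro s hs (k | j | k | k | ⟨i', b, c⟩ | ⟨i', b, c⟩)
  exacts [hA s hs k, hB j s hs, hC k s hs, hD k s hs, hE i' b c s hs, hF i' b c s hs]

end IsSkorokhodSolution

theorem IsSkorokhodSolution.apply_add_one {m : ℕ} {M : CounterMachine m} {i0 : Fin m}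
    {C₁0 C₂0 : ℕ} {y z : ℝ → Idx m → ℝ}
    (h : IsSkorokhodSolution (Rmat M) (fluidX i0 C₁0 C₂0) y z) {T : ℝ} (hT : 0 ≤ T)
    {δ : ℝ → Idx m → ℝ} (hδ : ∀ s ∈ Icc T (T + 1), ∀ j, y s j - y T j = δ (s - T) j) :
    z (T + 1) = z T + thetaVec m + (Rmat M).mulVec (δ 1) := by
  have hy : y (T + 1) - y T = δ 1 := by
    funext j
    simpa using hδ (T + 1) ⟨by linarith, le_rfl⟩ j
  funext j
  rw [h.apply_eq hT (by linarith) j, fluidX_sub, hy]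
  simp

section StageMaps

variable {m : ℕ} (M : CounterMachine m) (i : Fin m) (C₁ C₂ : ℕ)

theorem add_mulVec_A {p : Fin 5} {u v : Idx m → ℝ} (hu : ∀ k, u (.A k) = aState p k)
    (hv : ∀ l, v (.A l) = indC (l = p)) (k : Fin 5) :
    (u + thetaVec m + (Rmat M).mulVec v) (.A k) = aState (p + 1) k := by
  simp [Rmat_mulVec_A, hu, hv, indC, thetaVec, ← aState_add_one]
  ring

theorem encCfg_add_mulVec_incr₀ :
    encCfg i C₁ C₂ + thetaVec m + (Rmat M).mulVec (incr₀ i C₁ C₂ 1) = stage₁ i C₁ C₂ := by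
  funext j
  cases j with
  | A k =>
    exact add_mulVec_A M (v := incr₀ i C₁ C₂ 1) (encCfg_A i C₁ C₂) (fun _ => mul_one _) k
  | B j => by_cases hj : j = i <;> simp [Rmat_mulVec_B, incr₀, thetaVec, encCfg, stage₁, indC, hj]
  | C k =>
    simp [Rmat_mulVec_C, incr₀, thetaVec, encCfg_C, stage₁, indC]
    ring
  | D k => simp [Rmat_mulVec_D, incr₀, thetaVec, encCfg, stage₁, indC]
  | E i' b c =>
    simp [Rmat_mulVec_E, incr₀, thetaVec, encCfg, stage₁, indC, Upsilon, counter]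
    ring
  | F i' b c =>
    simp [Rmat_mulVec_F, incr₀, thetaVec, encCfg, stage₁, indC, Upsilon, counter]
    ring

theorem stage₁_add_mulVec_incr₁ :
    stage₁ i C₁ C₂ + thetaVec m + (Rmat M).mulVec (incr₁ C₁ C₂ 1) = stage₂ i C₁ C₂ := by
  funext j
  cases j with
  | A k =>
    exact add_mulVec_A M (p := 1) (v := incr₁ C₁ C₂ 1) (fun _ => rfl) (fun _ => mul_one _) k
  | B j => simp [Rmat_mulVec_B, incr₁, thetaVec, stage₁, stage₂, indC]
  | C k => by_cases hk : counter C₁ C₂ k = 0 <;>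
    simp [Rmat_mulVec_C, incr₁, thetaVec, stage₁, stage₂, indC, hk]
  | D k => by_cases hk : counter C₁ C₂ k = 0 <;>
    simp [Rmat_mulVec_D, incr₁, thetaVec, stage₁, stage₂, indC, hk]
  | E i' b c => simp [Rmat_mulVec_E, incr₁, thetaVec, stage₁, stage₂, indC]
  | F i' b c => simp [Rmat_mulVec_F, incr₁, thetaVec, stage₁, stage₂, indC]

theorem sum_mul_indC_isRead (f : Fin m → Bool → Bool → ℝ) :
    ∑ i', ∑ b, ∑ c, f i' b c * indC (IsRead i C₁ C₂ i' b c) =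
      f i (decide (0 < C₁)) (decide (0 < C₂)) := by
  simp_rw [mul_comm (f _ _ _)]
  exact sum_sum_sum_indC_mul f i _ _

theorem stage₂_add_mulVec_incr₂ :
    stage₂ i C₁ C₂ + thetaVec m + (Rmat M).mulVec (incr₂ i C₁ C₂ 1) = stage₃ M i C₁ C₂ := by
  funext j
  cases j with
  | A k =>
    exact add_mulVec_A M (p := 2) (v := incr₂ i C₁ C₂ 1) (fun _ => rfl) (fun _ => mul_one _) k
  | B j =>
    simp only [Pi.add_apply, Rmat_mulVec_B, incr₂, mul_one, sum_mul_indC_isRead]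
    simp [thetaVec, stage₂, stage₃, eq_comm]
  | C k =>
    simp only [Pi.add_apply, Rmat_mulVec_C, incr₂, mul_one, sum_mul_indC_isRead]
    simp [thetaVec, stage₂, stage₃]
    ring
  | D k => simp [Rmat_mulVec_D, incr₂, thetaVec, stage₂, stage₃]
  | E i' b c =>
    simp [Rmat_mulVec_E, incr₂, thetaVec, stage₂, stage₃]
    ring
  | F i' b c =>
    simp [Rmat_mulVec_F, incr₂, thetaVec, stage₂, stage₃]
    ring

theorem stage₃_add_mulVec_incr₃ :
    stage₃ M i C₁ C₂ + thetaVec m + (Rmat M).mulVec (incr₃ i C₁ C₂ 1) = stage₄ M i C₁ C₂ := by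
  funext j
  cases j with
  | A k =>
    exact add_mulVec_A M (p := 3) (v := incr₃ i C₁ C₂ 1) (fun _ => rfl) (fun _ => mul_one _) k
  | B j => simp [Rmat_mulVec_B, incr₃, thetaVec, stage₃, stage₄]
  | C k => simp [Rmat_mulVec_C, incr₃, thetaVec, stage₃, stage₄]
  | D k => simp [Rmat_mulVec_D, incr₃, thetaVec, stage₃, stage₄]
  | E i' b c =>
    have := Upsilon_nonpos i C₁ C₂ i' b c
    have := indC_le_one (IsRead i C₁ C₂ i' b c)
    simp only [Pi.add_apply, Rmat_mulVec_E, incr₃, thetaVec, stage₃, stage₄]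
    rw [max_eq_right (by linarith)]
    simp
    ring
  | F i' b c =>
    have := Upsilon_nonpos i C₁ C₂ i' b c
    have := indC_le_one (IsRead i C₁ C₂ i' b c)
    simp only [Pi.add_apply, Rmat_mulVec_F, incr₃, thetaVec, stage₃, stage₄]
    rw [max_eq_right (by linarith)]
    simp
    ring

theorem stage₄_add_mulVec_incr₄ :
    stage₄ M i C₁ C₂ + thetaVec m + (Rmat M).mulVec (incr₄ 1) =
      encCfg (M.step (i, C₁, C₂)).1 (M.step (i, C₁, C₂)).2.1 (M.step (i, C₁, C₂)).2.2 := by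
  funext j
  cases j with
  | A k =>
    rw [encCfg_A]
    exact add_mulVec_A M (p := 4) (v := incr₄ 1) (fun _ => rfl) (fun _ => mul_one _) k
  | B j =>
    simp [Rmat_mulVec_B, incr₄, thetaVec, stage₄, encCfg, CounterMachine.step]
    rfl
  | C k => simp [Rmat_mulVec_C, incr₄, thetaVec, stage₄, encCfg_C, M.counter_step]
  | D k => simp [Rmat_mulVec_D, incr₄, thetaVec, stage₄, encCfg]
  | E i' b c => simp [Rmat_mulVec_E, incr₄, thetaVec, stage₄, encCfg]
  | F i' b c =>
    simp [Rmat_mulVec_F, incr₄, thetaVec, stage₄, encCfg]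

end StageMaps

namespace IsSkorokhodSolution

variable {m : ℕ} {M : CounterMachine m} {i0 : Fin m} {C₁0 C₂0 : ℕ} {y z : ℝ → Idx m → ℝ}
  {T : ℝ} {i : Fin m} {C₁ C₂ : ℕ}

theorem apply_add_one_eq_stage₁ (h : IsSkorokhodSolution (Rmat M) (fluidX i0 C₁0 C₂0) y z)
    (hT : 0 ≤ T) (hzT : z T = encCfg i C₁ C₂) : z (T + 1) = stage₁ i C₁ C₂ := by
  rw [h.apply_add_one hT (h.sub_stage₀ hT hzT), hzT, encCfg_add_mulVec_incr₀]

theorem apply_add_one_eq_stage₂ (h : IsSkorokhodSolution (Rmat M) (fluidX i0 C₁0 C₂0) y z)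
    (hT : 0 ≤ T) (hzT : z T = stage₁ i C₁ C₂) : z (T + 1) = stage₂ i C₁ C₂ := by
  rw [h.apply_add_one hT (h.sub_stage₁ hT hzT), hzT, stage₁_add_mulVec_incr₁]

theorem apply_add_one_eq_stage₃ (h : IsSkorokhodSolution (Rmat M) (fluidX i0 C₁0 C₂0) y z)
    (hT : 0 ≤ T) (hzT : z T = stage₂ i C₁ C₂) : z (T + 1) = stage₃ M i C₁ C₂ := by
  rw [h.apply_add_one hT (h.sub_stage₂ hT hzT), hzT, stage₂_add_mulVec_incr₂]

theorem apply_add_one_eq_stage₄ (h : IsSkorokhodSolution (Rmat M) (fluidX i0 C₁0 C₂0) y z)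
    (hT : 0 ≤ T) (hzT : z T = stage₃ M i C₁ C₂) : z (T + 1) = stage₄ M i C₁ C₂ := by
  rw [h.apply_add_one hT (h.sub_stage₃ hT hzT), hzT, stage₃_add_mulVec_incr₃]

theorem apply_add_one_eq_encCfg_step
    (h : IsSkorokhodSolution (Rmat M) (fluidX i0 C₁0 C₂0) y z) (hT : 0 ≤ T)
    (hzT : z T = stage₄ M i C₁ C₂) :
    z (T + 1) =
      encCfg (M.step (i, C₁, C₂)).1 (M.step (i, C₁, C₂)).2.1 (M.step (i, C₁, C₂)).2.2 := by
  rw [h.apply_add_one hT (h.sub_stage₄ hT hzT), hzT, stage₄_add_mulVec_incr₄]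

end IsSkorokhodSolution

theorem dynamics_interval_4_general {m : ℕ} (M : CounterMachine m)
    (i0 : Fin m) (C₁0 C₂0 : ℕ) (y z : ℝ → Idx m → ℝ)
    (h : IsSkorokhodSolution (Rmat M) (fluidX i0 C₁0 C₂0) y z)
    (t : ℕ) (i : Fin m) (C₁ C₂ : ℕ)
    (hz : z (5 * (t : ℝ)) = encCfg i C₁ C₂) :
    (UnitActive (fun s => y s (.A 4)) (5 * (t : ℝ) + 4) (5 * (t : ℝ) + 5)) ∧
    (∀ k : Fin 5, k ≠ 4 →
      Passive (fun s => y s (.A k)) (5 * (t : ℝ) + 4) (5 * (t : ℝ) + 5)) ∧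
    (∀ j : Fin m, Passive (fun s => y s (.B j)) (5 * (t : ℝ) + 4) (5 * (t : ℝ) + 5)) ∧
    (∀ k : Fin 2, Passive (fun s => y s (.C k)) (5 * (t : ℝ) + 4) (5 * (t : ℝ) + 5)) ∧
    (∀ k : Fin 2, Passive (fun s => y s (.D k)) (5 * (t : ℝ) + 4) (5 * (t : ℝ) + 5)) ∧
    (∀ (i'' : Fin m) (b c : Bool),
      Passive (fun s => y s (.E i'' b c)) (5 * (t : ℝ) + 4) (5 * (t : ℝ) + 5)) ∧
    (∀ (i'' : Fin m) (b c : Bool),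
      Passive (fun s => y s (.F i'' b c)) (5 * (t : ℝ) + 4) (5 * (t : ℝ) + 5)) ∧
    (z (5 * (t : ℝ) + 5) =
      encCfg (M.step (i, C₁, C₂)).1 (M.step (i, C₁, C₂)).2.1
        (M.step (i, C₁, C₂)).2.2) := by
  have h₄ : z (5 * t + 4) = stage₄ M i C₁ C₂ := by
    have := h.apply_add_one_eq_stage₄ (by positivity) <| h.apply_add_one_eq_stage₃ (by positivity)
      <| h.apply_add_one_eq_stage₂ (by positivity) <| h.apply_add_one_eq_stage₁ (by positivity) hz
    rwa [show (5 * t + 1 + 1 + 1 + 1 : ℝ) = 5 * t + 4 by ring] at this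
  have hincr := h.sub_stage₄ (by positivity) h₄
  have hIoo : Ioo (5 * (t : ℝ) + 4) (5 * t + 5) ⊆ Icc (5 * t + 4) (5 * t + 4 + 1) :=
    fun s hs => ⟨hs.1.le, by linarith [hs.2]⟩
  refine ⟨fun s hs => ?_, fun k hk s hs => ?_, fun j s hs => ?_, fun k s hs => ?_,
    fun k s hs => ?_, fun i' b c s hs => ?_, fun i' b c s hs => ?_, ?_⟩
  · simpa [incr₄] using hincr s (hIoo hs) (.A 4)
  · simpa [incr₄, hk, sub_eq_zero] using hincr s (hIoo hs) (.A k)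
  · exact sub_eq_zero.1 (hincr s (hIoo hs) (.B j))
  · exact sub_eq_zero.1 (hincr s (hIoo hs) (.C k))
  · exact sub_eq_zero.1 (hincr s (hIoo hs) (.D k))
  · exact sub_eq_zero.1 (hincr s (hIoo hs) (.E i' b c))
  · exact sub_eq_zero.1 (hincr s (hIoo hs) (.F i' b c))
  · rw [show (5 * t + 5 : ℝ) = 5 * t + 4 + 1 by ring]
    exact h.apply_add_one_eq_encCfg_step (by positivity) h₄

/-- Dynamics over the interval `(5t+4, 5t+5)`: `y_{A,5}` is
active at unit rate, all other `y`-coordinates are passive, and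
`z(5t+5) = z^{i′,C₁+Δ₁,C₂+Δ₂}`, the encoding of the configuration of the
trajectory at time `t+1`. -/
theorem dynamics_interval_4 {m : ℕ} (M : CounterMachine m)
    (i0 : Fin m) (C₁0 C₂0 : ℕ) (y z : ℝ → Idx m → ℝ)
    (h : IsSkorokhodSolution (Rmat M) (fluidX i0 C₁0 C₂0) y z)
    (t : ℕ) (i : Fin m) (C₁ C₂ : ℕ)
    (htraj : (M.step)^[t] (i0, C₁0, C₂0) = (i, C₁, C₂))
    (hz : z (5 * (t : ℝ)) = encCfg i C₁ C₂) :
    (UnitActive (fun s => y s (.A 4)) (5 * (t : ℝ) + 4) (5 * (t : ℝ) + 5)) ∧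
    (∀ k : Fin 5, k ≠ 4 →
      Passive (fun s => y s (.A k)) (5 * (t : ℝ) + 4) (5 * (t : ℝ) + 5)) ∧
    (∀ j : Fin m, Passive (fun s => y s (.B j)) (5 * (t : ℝ) + 4) (5 * (t : ℝ) + 5)) ∧
    (∀ k : Fin 2, Passive (fun s => y s (.C k)) (5 * (t : ℝ) + 4) (5 * (t : ℝ) + 5)) ∧
    (∀ k : Fin 2, Passive (fun s => y s (.D k)) (5 * (t : ℝ) + 4) (5 * (t : ℝ) + 5)) ∧
    (∀ (i'' : Fin m) (b c : Bool),
      Passive (fun s => y s (.E i'' b c)) (5 * (t : ℝ) + 4) (5 * (t : ℝ) + 5)) ∧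
    (∀ (i'' : Fin m) (b c : Bool),
      Passive (fun s => y s (.F i'' b c)) (5 * (t : ℝ) + 4) (5 * (t : ℝ) + 5)) ∧
    (z (5 * (t : ℝ) + 5) =
      encCfg (M.step (i, C₁, C₂)).1 (M.step (i, C₁, C₂)).2.1
        (M.step (i, C₁, C₂)).2.2) :=
  dynamics_interval_4_general M i0 C₁0 C₂0 y z h t i C₁ C₂ hz
end

section
/- Let Γ be a consistent counter machine with m states and i* ∈ {1,…,m} a designated halting state, and let R* be the modified reflection matrix. Let (y,z) be a Skorokhod solution for (R*, x) with x(t) = z₀ + θt (drift θ as in the construction), and suppose at some time T ≥ 0 one has z(T) = z^{i*,1,1}. Then on the interval (T, T+1) the coordinates y_{A,1} and y_{B,i*} are active at unit rate and all other y-coordinates are passive, and z(T+1) = 0 (the zero vector of ℝ^d). -/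
open scoped BigOperators

/-!
Along the candidate motion, in which `y_{A,1}` and `y_{B,i*}` grow at unit rate and every other
coordinate of `y` is frozen, `z` runs down the ray `s ↦ (T + 1 - s) z^{i*,1,1}`, because
`θ + R* (e_{A,1} + e_{B,i*}) = -z^{i*,1,1}`. The solution is forced onto this motion by
continuous induction on `[T, T + 1]`: at a point of the ray, the coordinates where `z^{i*,1,1}`
is positive stay positive for a while, so their `y` is frozen; on the five coordinates where it
vanishes, `R*` is lower triangular with unit diagonal (in the order `A_1, B_{i*}, A_5, D_1, D_2`),
and each of them in turn is a one-dimensional reflection of a nonincreasing drift started at `0`,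
which never leaves `0`.
-/

open Set Filter Topology Matrix

lemma Matrix.mulVec_apply_eq_sum_of_support {l n R : Type*} [Fintype n]
    [NonUnitalNonAssocSemiring R] (A : Matrix l n R) {v : n → R} {S : Finset n}
    (hv : ∀ q ∉ S, v q = 0) (p : l) :
    (A *ᵥ v) p = ∑ q ∈ S, A p q * v q :=
  (Finset.sum_subset (Finset.subset_univ S) fun q _ hq => by rw [hv q hq, mul_zero]).symm

lemma eq_zero_of_reflected_drift {Y Z : ℝ → ℝ} {a b r : ℝ} (hr : 0 ≤ r)
    (hZc : ContinuousOn Z (Icc a b)) (hZ : ∀ s ∈ Icc a b, 0 ≤ Z s)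
    (hY : ∀ s₁ s₂, a ≤ s₁ → s₁ ≤ s₂ → s₂ ≤ b → (∀ s ∈ Ioo s₁ s₂, 0 < Z s) → Y s₂ = Y s₁)
    (hZY : ∀ s ∈ Icc a b, Z s = Y s - Y a - (s - a) * r) :
    ∀ s ∈ Icc a b, Z s = 0 := by
  intro s₀ hs₀
  by_contra hne
  have hpos : 0 < Z s₀ := (hZ s₀ hs₀).lt_of_ne' hne
  have hZa : Z a = 0 := by simpa using hZY a ⟨le_rfl, hs₀.1.trans hs₀.2⟩
  -- the last zero `w` of `Z` before `s₀`; `Y` is flat on `[w, s₀]`, so `Z` can only decrease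
  set K := Icc a s₀ ∩ Z ⁻¹' {0}
  have hK : IsCompact K := isCompact_Icc.of_isClosed_subset
    ((hZc.mono (Icc_subset_Icc_right hs₀.2)).preimage_isClosed_of_isClosed isClosed_Icc
      isClosed_singleton) inter_subset_left
  obtain ⟨w, ⟨⟨haw, hws⟩, hZw⟩, hw⟩ := hK.exists_isGreatest ⟨a, ⟨le_rfl, hs₀.1⟩, hZa⟩
  have hZ_Ioo : ∀ s ∈ Ioo w s₀, 0 < Z s := fun s hs =>
    (hZ s ⟨haw.trans hs.1.le, hs.2.le.trans hs₀.2⟩).lt_of_ne' fun h0 =>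
      (hw ⟨⟨haw.trans hs.1.le, hs.2.le⟩, h0⟩).not_gt hs.1
  have hYw := hY w s₀ haw hws hs₀.2 hZ_Ioo
  have e₀ := hZY s₀ hs₀
  have e_w := hZY w ⟨haw, hws.trans hs₀.2⟩
  simp only [mem_preimage, mem_singleton_iff] at hZw
  linarith [mul_le_mul_of_nonneg_right hws hr]

lemma IsSkorokhodSolution.eq_add_mulVec_sub {n : Type*} [Fintype n] {R : Matrix n n ℝ}
    {z₀ θ : n → ℝ} {y z : ℝ → n → ℝ}
    (h : IsSkorokhodSolution R (fun t p => z₀ p + θ p * t) y z) {s t : ℝ}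
    (hs : 0 ≤ s) (ht : 0 ≤ t) :
    z s = z t + (s - t) • θ + R *ᵥ (y s - y t) := by
  rw [h.2.2.1 s hs, h.2.2.1 t ht, mulVec_sub]
  ext p
  simp only [Pi.add_apply, Pi.sub_apply, Pi.smul_apply, smul_eq_mul]
  ring

namespace Idx

variable {m : ℕ}

def haltRate (istar : Fin m) : Idx m → ℝ := Pi.single (.A 0) 1 + Pi.single (.B istar) 1

def haltZeros (istar : Fin m) : Finset (Idx m) := {.A 0, .A 4, .B istar, .D 0, .D 1}

lemma haltRate_nonneg (istar : Fin m) (p : Idx m) : 0 ≤ haltRate istar p := by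
  simp only [haltRate, Pi.add_apply, Pi.single_apply]
  positivity

lemma haltRate_A_zero (istar : Fin m) : haltRate istar (.A 0) = 1 := by
  simp [haltRate]

lemma haltRate_B (istar : Fin m) : haltRate istar (.B istar) = 1 := by
  simp [haltRate]

lemma haltRate_of_ne {istar : Fin m} {p : Idx m} (h₁ : p ≠ .A 0) (h₂ : p ≠ .B istar) :
    haltRate istar p = 0 := by
  simp [haltRate, h₁, h₂]

lemma haltRate_of_not_mem {istar : Fin m} {p : Idx m} (hp : p ∉ haltZeros istar) :
    haltRate istar p = 0 := by
  simp only [haltZeros, Finset.mem_insert, Finset.mem_singleton, not_or] at hp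
  exact haltRate_of_ne hp.1 hp.2.2.1

end Idx

open Idx

section Halting

variable {m : ℕ}

lemma encCfg_nonneg (i : Fin m) (C₁ C₂ : ℕ) (p : Idx m) : 0 ≤ encCfg i C₁ C₂ p := by
  cases p <;> simp only [encCfg] <;> (try split_ifs) <;> positivity

lemma encCfg_one_one_eq_zero_iff {i : Fin m} {p : Idx m} :
    encCfg i 1 1 p = 0 ↔ p ∈ haltZeros i := by
  rcases p with k | j | k | k | _ | _ <;> simp [encCfg, haltZeros] <;> fin_cases k <;> decide

variable (M : CounterMachine m) (istar : Fin m)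

lemma thetaVec_add_mulVec_haltRate :
    thetaVec m + RmatStar M istar *ᵥ haltRate istar = -encCfg istar 1 1 := by
  ext p
  simp only [haltRate, mulVec_add, mulVec_single_one, Pi.add_apply, Pi.neg_apply, col_apply]
  rcases p with k | j | k | k | _ | _
  · fin_cases k <;> norm_num +decide [RmatStar, Rmat, thetaVec, encCfg, AAmat]
  · obtain rfl | hj := eq_or_ne j istar
    · simp [RmatStar, Rmat, thetaVec, encCfg]
    · simp [RmatStar, Rmat, thetaVec, encCfg, hj, hj.symm]
  all_goals simp [RmatStar, Rmat, thetaVec, encCfg]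

lemma RmatStar_mulVec_of_haltZeros {v : Idx m → ℝ} (hv : ∀ q ∉ haltZeros istar, v q = 0) :
    (RmatStar M istar *ᵥ v) (.A 0) = v (.A 0) ∧
    (RmatStar M istar *ᵥ v) (.B istar) = v (.B istar) - v (.A 0) ∧
    (RmatStar M istar *ᵥ v) (.A 4) = 2 * v (.A 0) + v (.A 4) - v (.B istar) ∧
    ∀ k, (RmatStar M istar *ᵥ v) (.D k) = v (.D k) := by
  simp only [mulVec_apply_eq_sum_of_support _ hv, haltZeros]
  refine ⟨?_, ?_, ?_, fun k => ?_⟩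
  · simp +decide [RmatStar, Rmat, AAmat]
  · simp +decide [RmatStar, Rmat]; ring
  · simp +decide [RmatStar, Rmat, AAmat]; ring
  · fin_cases k <;> simp +decide [RmatStar, Rmat]

variable {M istar} {z₀ : Idx m → ℝ} {y z : ℝ → Idx m → ℝ}

lemma IsSkorokhodSolution.eq_sub_smul_encCfg_add_mulVec
    (h : IsSkorokhodSolution (RmatStar M istar) (fun t p => z₀ p + thetaVec m p * t) y z)
    {s t : ℝ} (hs : 0 ≤ s) (ht : 0 ≤ t) :
    z s = z t - (s - t) • encCfg istar 1 1
      + RmatStar M istar *ᵥ (y s - y t - (s - t) • haltRate istar) := by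
  rw [h.eq_add_mulVec_sub hs ht, ← neg_neg (encCfg istar 1 1),
    ← thetaVec_add_mulVec_haltRate M istar]
  simp only [mulVec_sub, mulVec_smul]
  module

lemma IsSkorokhodSolution.eventually_eq_add_smul_haltRate
    (h : IsSkorokhodSolution (RmatStar M istar) (fun t p => z₀ p + thetaVec m p * t) y z)
    {x c : ℝ} (hx : 0 ≤ x) (hc : 0 < c) (hzx : z x = c • encCfg istar 1 1) :
    ∀ᶠ s in 𝓝[≥] x, y s = y x + (s - x) • haltRate istar := by
  obtain ⟨-, hzc, -, hznn, -, -, hcomp⟩ := id h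
  have hpos : ∀ᶠ s in 𝓝[≥] x, ∀ p ∉ haltZeros istar, 0 < z s p := by
    have hz : Tendsto z (𝓝[≥] x) (𝓝 (z x)) := (hzc x hx).mono (Ici_subset_Ici.2 hx)
    refine eventually_all.2 fun p => ?_
    by_cases hp : p ∈ haltZeros istar
    · exact .of_forall fun _ hp' => absurd hp hp'
    have hzxp : 0 < z x p := by
      rw [hzx]
      exact mul_pos hc <| (encCfg_nonneg _ _ _ p).lt_of_ne'
        (mt encCfg_one_one_eq_zero_iff.1 hp)
    filter_upwards [(tendsto_pi_nhds.1 hz p).eventually (lt_mem_nhds hzxp)] with s hs _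
    exact hs
  obtain ⟨u, hxu, hu⟩ := mem_nhdsGE_iff_exists_Icc_subset.1 hpos
  set Δ : ℝ → Idx m → ℝ := fun s => y s - y x - (s - x) • haltRate istar with hΔ
  have hΔ_out : ∀ s ∈ Icc x u, ∀ q ∉ haltZeros istar, Δ s q = 0 := fun s hs q hq => by
    have hyq := hcomp q x s hx hs.1 fun v hv => hu ⟨hv.1.le, hv.2.le.trans hs.2⟩ q hq
    simp [Δ, haltRate_of_not_mem hq, hyq]
  have hz_zeros : ∀ s ∈ Icc x u, ∀ q ∈ haltZeros istar,
      z s q = (RmatStar M istar *ᵥ Δ s) q := fun s hs q hq => by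
    rw [h.eq_sub_smul_encCfg_add_mulVec (hx.trans hs.1) hx, hzx]
    simp [encCfg_one_one_eq_zero_iff.2 hq, Δ]
  have settle : ∀ q, (∀ s ∈ Icc x u, z s q = Δ s q) → ∀ s ∈ Icc x u, Δ s q = 0 := by
    intro q hq s hs
    rw [← hq s hs]
    refine eq_zero_of_reflected_drift (haltRate_nonneg istar q)
      (((continuous_apply q).comp_continuousOn hzc).mono fun v hv => hx.trans hv.1)
      (fun v hv => hznn v (hx.trans hv.1) q)
      (fun s₁ s₂ h₁ h₁₂ _ => hcomp q s₁ s₂ (hx.trans h₁) h₁₂) (fun v hv => ?_) s hs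
    simp [hq v hv, Δ]
  have row := fun s hs => RmatStar_mulVec_of_haltZeros M istar (hΔ_out s hs)
  have hA₀ := settle (.A 0) fun s hs => by
    rw [hz_zeros s hs _ (by simp [haltZeros]), (row s hs).1]
  have hB := settle (.B istar) fun s hs => by
    rw [hz_zeros s hs _ (by simp [haltZeros]), (row s hs).2.1, hA₀ s hs, sub_zero]
  have hA₄ := settle (.A 4) fun s hs => by
    rw [hz_zeros s hs _ (by simp [haltZeros]), (row s hs).2.2.1, hA₀ s hs, hB s hs]
    ring
  have hD := fun k => settle (.D k) fun s hs => by
    rw [hz_zeros s hs _ (by fin_cases k <;> simp [haltZeros]), (row s hs).2.2.2]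
  filter_upwards [Icc_mem_nhdsGE hxu] with s hs
  suffices Δ s = 0 by rwa [hΔ, sub_eq_zero, sub_eq_iff_eq_add'] at this
  ext q
  by_cases hq : q ∈ haltZeros istar
  · simp only [haltZeros, Finset.mem_insert, Finset.mem_singleton] at hq
    rcases hq with rfl | rfl | rfl | rfl | rfl
    exacts [hA₀ s hs, hA₄ s hs, hB s hs, hD 0 s hs, hD 1 s hs]
  · exact hΔ_out s hs q hq

end Halting

/-- For the modified matrix `R*`, if a Skorokhod solution for
`x(t) = z₀ + θ t` satisfies `z(T) = z^{i*,1,1}` at some time `T ≥ 0`, then on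
`(T, T+1)` the coordinates `y_{A,1}` and `y_{B,i*}` are active at unit rate, all
other `y`-coordinates are passive, and `z(T+1) = 0`. -/
theorem halting_state_empties_system {m : ℕ} (M : CounterMachine m)
    (istar : Fin m) (z0 : Idx m → ℝ) (y z : ℝ → Idx m → ℝ)
    (h : IsSkorokhodSolution (RmatStar M istar)
      (fun t p => z0 p + thetaVec m p * t) y z)
    (T : ℝ) (hT : 0 ≤ T) (hzT : z T = encCfg istar 1 1) :
    (UnitActive (fun s => y s (.A 0)) T (T + 1)) ∧
    (UnitActive (fun s => y s (.B istar)) T (T + 1)) ∧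
    (∀ p : Idx m, p ≠ .A 0 → p ≠ .B istar → Passive (fun s => y s p) T (T + 1)) ∧
    z (T + 1) = 0 := by
  set S : Set ℝ := {s | y s = y T + (s - T) • haltRate istar}
  have hz_S : ∀ s ∈ S, T ≤ s → z s = (T + 1 - s) • encCfg istar 1 1 := fun s hs hTs => by
    rw [h.eq_sub_smul_encCfg_add_mulVec (hT.trans hTs) hT, hzT, hs]
    simp only [add_sub_cancel_left, sub_self, mulVec_zero, add_zero]
    module
  have hS : Icc T (T + 1) ⊆ S := by
    refine IsClosed.Icc_subset_of_forall_mem_nhdsWithin ?_ (by simp [S]) fun x ⟨hxS, hx⟩ => ?_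
    · rw [inter_comm]
      exact isClosed_Icc.isClosed_eq (h.1.mono fun s hs => hT.trans hs.1) (by fun_prop)
    · have hx_near := h.eventually_eq_add_smul_haltRate (hT.trans hx.1) (by linarith [hx.2])
        (hz_S x hxS hx.1)
      refine nhdsWithin_mono _ Ioi_subset_Ici_self <| hx_near.mono fun s hs => ?_
      simp only [S, mem_ofPred_eq] at hxS ⊢
      rw [hs, hxS, add_assoc, ← add_smul, sub_add_sub_cancel']
  have hy : ∀ s ∈ Ioo T (T + 1), ∀ p, y s p - y T p = haltRate istar p * (s - T) :=
    fun s hs p => by rw [hS (Ioo_subset_Icc_self hs)]; simp [mul_comm]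
  refine ⟨fun s hs => ?_, fun s hs => ?_, fun p hA hB s hs => ?_, ?_⟩
  · rw [hy s hs, haltRate_A_zero]
  · rw [hy s hs, haltRate_B]
  · rw [← sub_eq_zero, hy s hs, haltRate_of_ne hA hB, zero_mul]
  · rw [hz_S _ (hS ⟨by linarith, le_rfl⟩) (by linarith), sub_self, zero_smul]
end

section
/- Let Γ be a consistent counter machine with m states, i* ∈ {1,…,m}, and R* the modified reflection matrix of dimension d = 5m+9. Define the strictly positive vector v ∈ ℝ^d by v_{A,1} = v_{A,2} = 1, v_{A,3} = v_{A,4} = v_{A,5} = 3, v_{B,j} = 2 for all j, v_{C,k} = 5 for k = 1,2, v_{D,k} = 2 for k = 1,2, v_{E,(i,b,c)} = 25 and v_{F,(i,b,c)} = 38 for all (i,b,c). Then for every nonempty subset I of the index set {1,…,d} and every i ∈ I, one has Σ_{j∈I} R*_{i,j} v_j > 0. -/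
open scoped BigOperators

/-- The witness vector `v` of Proposition 5.1. -/
def vvec (m : ℕ) : Idx m → ℝ := fun p => match p with
  | .A k => if k = 0 ∨ k = 1 then 1 else 3
  | .B _ => 2
  | .C _ => 5
  | .D _ => 2
  | .E _ _ _ => 25
  | .F _ _ _ => 38

/-!
`R*` is row-wise diagonally dominant against `v`: in every row `p` the diagonal term
`R*_{pp} v_p` exceeds the negative mass `∑_q max(0, -R*_{pq} v_q)` of the row. Restricting the
row to an index set `I ∋ p` keeps the diagonal term and can only discard negative mass, so the
restricted sum stays positive. Negative mass against diagonal term, row by row: `0 < 1` or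
`2 < 3` (A), `1 < 2` (B), `4 < 5` (C; the entries `Δ_k + 1` towards E are nonnegative because
every move has `Δ_k ≥ -1`), `1 < 2` (D), and at worst `21 < 25` (E) and `35 < 38` (F), attained
at `b = c = 0`, `i ≠ i*`.
-/

theorem add_sum_min_zero_le_sum {ι α : Type*} [Fintype ι] [DecidableEq ι] [AddCommGroup α]
    [LinearOrder α] [IsOrderedAddMonoid α] (a : ι → α) {I : Finset ι} {i : ι} (hi : i ∈ I) :
    a i + ∑ j, min (a j) 0 ≤ ∑ j ∈ I, a j :=
  calc a i + ∑ j, min (a j) 0 ≤ a i + ∑ j ∈ I.erase i, min (a j) 0 :=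
        add_le_add_right
          (Finset.sum_anti_set_of_nonpos' (fun j => min_le_right _ _) (Finset.subset_univ _)) _
    _ ≤ a i + ∑ j ∈ I.erase i, a j := by gcongr with j; exact min_le_left _ _
    _ = ∑ j ∈ I, a j := Finset.add_sum_erase I a hi

theorem Finset.sum_ite_eq_ite_eq {ι α : Type*} [Fintype ι] [DecidableEq ι] [AddCommMonoid α]
    (s t : ι) (u v : α) :
    ∑ x, (if x = s then u else if x = t then v else 0) = u + if t = s then 0 else v := by
  by_cases h : t = s
  · subst h; simp +contextual
  · rw [Finset.sum_ite, Finset.sum_ite]; simp [Finset.filter_eq', Finset.filter_ne', h]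

namespace Idx

def equivSum_s16 (m : ℕ) :
    (Fin 5 ⊕ Fin m ⊕ Fin 2 ⊕ Fin 2 ⊕ (Fin m × Bool × Bool) ⊕ (Fin m × Bool × Bool)) ≃ Idx m where
  toFun
    | .inl k => .A k
    | .inr (.inl j) => .B j
    | .inr (.inr (.inl k)) => .C k
    | .inr (.inr (.inr (.inl k))) => .D k
    | .inr (.inr (.inr (.inr (.inl (i, b, c))))) => .E i b c
    | .inr (.inr (.inr (.inr (.inr (i, b, c))))) => .F i b c
  invFun
    | .A k => .inl k
    | .B j => .inr (.inl j)
    | .C k => .inr (.inr (.inl k))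
    | .D k => .inr (.inr (.inr (.inl k)))
    | .E i b c => .inr (.inr (.inr (.inr (.inl (i, b, c)))))
    | .F i b c => .inr (.inr (.inr (.inr (.inr (i, b, c)))))
  left_inv x := by rcases x with k | j | k | k | ⟨i, b, c⟩ | ⟨i, b, c⟩ <;> rfl
  right_inv p := by cases p <;> rfl

theorem sum_eq_s16 {m : ℕ} {α : Type*} [AddCommMonoid α] (f : Idx m → α) :
    ∑ p, f p = (∑ k : Fin 5, f (.A k)) + (∑ j : Fin m, f (.B j))
      + (∑ k : Fin 2, f (.C k)) + (∑ k : Fin 2, f (.D k))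
      + (∑ x : Fin m × Bool × Bool, f (.E x.1 x.2.1 x.2.2))
      + (∑ x : Fin m × Bool × Bool, f (.F x.1 x.2.1 x.2.2)) := by
  rw [← (equivSum_s16 m).sum_comp f]
  simp only [Fintype.sum_sum_type, equivSum_s16, Equiv.coe_fn_mk, add_assoc]

end Idx

theorem CounterMachine.move_add_one_nonneg {m : ℕ} (M : CounterMachine m) (i : Fin m)
    (b c : Bool) : (0 : ℝ) ≤ (M.Γ i b c).2.1 + 1 ∧ (0 : ℝ) ≤ (M.Γ i b c).2.2 + 1 := by
  have h := M.moves i b c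
  simp only [Set.mem_insert_iff, Set.mem_singleton_iff, Prod.mk.injEq] at h
  rcases h with ⟨h₁, h₂⟩ | ⟨h₁, h₂⟩ | ⟨h₁, h₂⟩ | ⟨h₁, h₂⟩ | ⟨h₁, h₂⟩ <;> norm_num [h₁, h₂]

theorem rmatStar_diag_add_sum_min_zero_pos {m : ℕ} (M : CounterMachine m) (istar : Fin m)
    (p : Idx m) :
    0 < RmatStar M istar p p * vvec m p + ∑ q, min (RmatStar M istar p q * vvec m q) 0 := by
  rw [Idx.sum_eq_s16]
  cases p with
  | A k =>
    fin_cases k <;> simp [RmatStar, Rmat, vvec, AAmat, Fin.sum_univ_five, apply_ite (min · (0:ℝ))]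
      <;> norm_num
  | B j => simp [RmatStar, Rmat, vvec, Fin.sum_univ_five, apply_ite (min · (0:ℝ))]
  | C k =>
    fin_cases k <;> simp [RmatStar, Rmat, vvec, Fin.sum_univ_five, apply_ite (min · (0:ℝ)),
      M.move_add_one_nonneg] <;> norm_num
  | D k => fin_cases k <;> simp [RmatStar, Rmat, vvec, Fin.sum_univ_five, apply_ite (min · (0:ℝ))]
  | E i b c | F i b c =>
    cases b <;> cases c <;>
      simp [RmatStar, Rmat, vvec, bnum, Fin.sum_univ_five, apply_ite (min · (0:ℝ))] <;>
      norm_num [Finset.sum_ite_eq_ite_eq] <;> split_ifs <;> norm_num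

theorem vvec_pos {m : ℕ} (p : Idx m) : 0 < vvec m p := by
  cases p <;> simp only [vvec] <;> positivity

/-- The single strictly positive vector `v` witnesses the
S-matrix property of every principal submatrix of the modified matrix `R*`:
for every nonempty index set `I` and every `i ∈ I`,
`∑_{j ∈ I} R*_{i,j} v_j > 0`. -/
theorem vvec_witnesses_completelyS {m : ℕ} (M : CounterMachine m)
    (istar : Fin m) :
    (∀ p : Idx m, 0 < vvec m p) ∧
    ∀ I : Finset (Idx m), I.Nonempty → ∀ i ∈ I,
      0 < ∑ j ∈ I, RmatStar M istar i j * vvec m j :=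
  ⟨vvec_pos, fun _ _ i hi => (rmatStar_diag_add_sum_min_zero_pos M istar i).trans_le
    (add_sum_min_zero_le_sum (fun q => RmatStar M istar i q * vvec m q) hi)⟩
end
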